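/- arXiv:1504.06559 — 5 statements merged into one kernel-verified Lean document; each statement's English description precedes it below -/
import Mathlib

section
/- Let (X,T) be a topological dynamical system and let Y be a zero-dimensional compact metrizable space. Assume that for every ε > 0 there exists an essentially continuous ε-injective map from X to Y. Then (X,T) has the small boundary property. -/
open MeasureTheory Filter Topology Set
open scoped ENNReal NNReal Classical

noncomputable section

namespace Krieger

/-- The shift map `σ` on bi-infinite sequences: `(σ x) i = x (i+1)`. -/
def shift {Λ : Type*} (x : ℤ → Λ) : ℤ → Λ := fun i => x (i + 1)

/-- `Per_n(X,T)` : the set of periodic points of least period `n`. -/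
def leastPer {X : Type*} (T : X → X) (n : ℕ) : Set X :=
  {x | Function.minimalPeriod T x = n}

/-- The set `M(X,T)` of `T`-invariant Borel probability measures. -/
def invProb {X : Type*} [MeasurableSpace X] (T : X → X) : Set (ProbabilityMeasure X) :=
  {μ | ∀ s : Set X, MeasurableSet s → μ.toMeasure (T ⁻¹' s) = μ.toMeasure s}

/-- Pushforward of a probability measure under a map (junk value if not a.e. measurable). -/
def pushPM {X Y : Type*} [MeasurableSpace X] [MeasurableSpace Y] (ψ : X → Y)
    (μ : ProbabilityMeasure X) : ProbabilityMeasure Y :=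
  if h : AEMeasurable ψ μ.toMeasure then ⟨μ.toMeasure.map ψ, Measure.isProbabilityMeasure_map h⟩
  else ⟨Measure.dirac (ψ μ.nonempty.some), inferInstance⟩

/-- The induced map `ψ* : M(X,T) → M(Y)` on invariant probability measures, viewed as a
map into the ambient space of probability measures on `Y`. -/
def inducedMap {X Y : Type*} [MeasurableSpace X] [MeasurableSpace Y] (T : X → X) (ψ : X → Y) :
    ↥(invProb T) → ProbabilityMeasure Y :=
  fun μ => pushPM ψ (μ : ProbabilityMeasure X)

/-- A finite open cover of the whole space. -/
def IsOpenCover {X : Type*} [TopologicalSpace X] (U : Finset (Set X)) : Prop :=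
  (∀ A ∈ U, IsOpen A) ∧ ⋃₀ (U : Set (Set X)) = univ

/-- The join `U ∨ V` of two finite families of sets. -/
def joinC {X : Type*} (U V : Finset (Set X)) : Finset (Set X) :=
  (U ×ˢ V).image fun p => p.1 ∩ p.2

/-- The dynamical join `U^n = ⋁_{i=0}^{n-1} T^{-i} U`. -/
def dynCover {X : Type*} (T : X → X) (U : Finset (Set X)) : ℕ → Finset (Set X)
  | 0 => {univ}
  | n + 1 => joinC (dynCover T U n) (U.image fun A => T^[n] ⁻¹' A)

/-- Minimal cardinality of a subfamily of `V` covering the set `W`. -/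
def coverCard {X : Type*} (V : Finset (Set X)) (W : Set X) : ℕ :=
  sInf {m | ∃ F : Finset (Set X), F ⊆ V ∧ W ⊆ ⋃₀ (F : Set (Set X)) ∧ F.card = m}

/-- The topological conditional entropy `h(V|U)` of the cover `V` given the cover `U`. -/
def condEnt {X : Type*} (T : X → X) (V U : Finset (Set X)) : ℝ :=
  limsup (fun n : ℕ =>
    (⨆ W ∈ dynCover T U n, Real.log (coverCard (dynCover T V n) W)) / n) atTop

/-- `per(T|U)` : exponential growth rate of periodic orbits seen at the scale of `U`. -/
def perEnt {X : Type*} (T : X → X) (U : Finset (Set X)) : ℝ :=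
  limsup (fun n : ℕ =>
    (⨆ W ∈ dynCover T U n, Real.log (Nat.card ↥(leastPer T n ∩ W))) / n) atTop

/-- Asymptotic h-expansiveness: `inf_U sup_V h(V|U) = 0`. -/
def AsympHExpansive {X : Type*} [TopologicalSpace X] (T : X → X) : Prop :=
  ∀ ε > (0:ℝ), ∃ U : Finset (Set X), IsOpenCover U ∧
    ∀ V : Finset (Set X), IsOpenCover V → condEnt T V U < ε

/-- Asymptotic per-expansiveness: `inf_U per(T|U) = 0`. -/
def AsympPerExpansive {X : Type*} [TopologicalSpace X] (T : X → X) : Prop :=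
  ∀ ε > (0:ℝ), ∃ U : Finset (Set X), IsOpenCover U ∧ perEnt T U < ε

/-- Asymptotic expansiveness: both asymptotic h- and per-expansiveness. -/
def AsympExpansive {X : Type*} [TopologicalSpace X] (T : X → X) : Prop :=
  AsympHExpansive T ∧ AsympPerExpansive T

/-- A finite measurable partition of the space. -/
def IsMeasPartition {X : Type*} [MeasurableSpace X] (P : Finset (Set X)) : Prop :=
  (∀ A ∈ P, MeasurableSet A) ∧ ⋃₀ (P : Set (Set X)) = univ ∧
    ∀ A ∈ P, ∀ B ∈ P, A ≠ B → A ∩ B = ∅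

/-- A finite clopen partition of the space. -/
def IsClopenPartition {X : Type*} [TopologicalSpace X] (P : Finset (Set X)) : Prop :=
  (∀ A ∈ P, IsClopen A) ∧ ⋃₀ (P : Set (Set X)) = univ ∧
    ∀ A ∈ P, ∀ B ∈ P, A ≠ B → A ∩ B = ∅

/-- Shannon entropy `H_μ(P)` of a finite family of sets. -/
def entH {X : Type*} [MeasurableSpace X] (μ : Measure X) (P : Finset (Set X)) : ℝ :=
  ∑ A ∈ P, Real.negMulLog (μ A).toReal

/-- Dynamical entropy `h_μ(T,P) = lim_n (1/n) H_μ(⋁_{i<n} T^{-i}P)` of a partition. -/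
def entPart {X : Type*} [MeasurableSpace X] (T : X → X) (μ : Measure X)
    (P : Finset (Set X)) : ℝ :=
  limsup (fun n : ℕ => entH μ (dynCover T P n) / n) atTop

/-- Kolmogorov–Sinai entropy `h_μ(T)`. -/
def ksEntropy {X : Type*} [MeasurableSpace X] (T : X → X) (μ : Measure X) : ℝ :=
  ⨆ P : {P : Finset (Set X) // IsMeasPartition P}, entPart T μ P.1

/-- A set is null when it is negligible for every invariant ergodic probability measure. -/
def IsNullSet {X : Type*} [MeasurableSpace X] (T : X → X) (A : Set X) : Prop :=
  ∀ μ : Measure X, IsProbabilityMeasure μ → Ergodic T μ → μ A = 0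

/-- A set is full when it has full measure for every invariant ergodic probability measure. -/
def IsFullSet {X : Type*} [MeasurableSpace X] (T : X → X) (A : Set X) : Prop :=
  ∀ μ : Measure X, IsProbabilityMeasure μ → Ergodic T μ → μ A = 1

/-- The small boundary property : finite partitions with small boundaries and arbitrarily
small diameters. -/
def SBP {X : Type*} [MetricSpace X] [MeasurableSpace X] (T : X → X) : Prop :=
  ∀ ε > (0:ℝ), ∃ P : Finset (Set X),
    (⋃₀ (P : Set (Set X)) = univ) ∧
    (∀ A ∈ P, ∀ B ∈ P, A ≠ B → A ∩ B = ∅) ∧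
    (∀ A ∈ P, IsNullSet T (frontier A)) ∧
    (∀ A ∈ P, Metric.diam A < ε)

/-- A Borel map into a zero-dimensional space is essentially continuous when preimages of a
basis of clopen sets have small boundaries. -/
def EssCont {X Y : Type*} [TopologicalSpace X] [MeasurableSpace X] [TopologicalSpace Y]
    (T : X → X) (ψ : X → Y) : Prop :=
  ∃ B : Set (Set Y), TopologicalSpace.IsTopologicalBasis B ∧ (∀ s ∈ B, IsClopen s) ∧
    ∀ s ∈ B, IsNullSet T (frontier (ψ ⁻¹' s))

/-- An `ε`-injective map between metric spaces. -/
def EpsInjective {X Y : Type*} [MetricSpace X] [MetricSpace Y] (φ : X → Y) (ε : ℝ) : Prop :=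
  ∃ δ > (0:ℝ), ∀ Z : Set Y, Metric.diam Z < δ → Metric.diam (φ ⁻¹' Z) < ε

/-- The Cantor metric on the shift space : `d(x,y) = 2^{-min{ i ≥ 0 : x_i ≠ y_i or x_{-i} ≠ y_{-i}}}`. -/
def cantorDist {Λ : Type*} (x y : ℤ → Λ) : ℝ :=
  if x = y then 0
  else (2:ℝ)⁻¹ ^ sInf {n : ℕ | x (n:ℤ) ≠ y (n:ℤ) ∨ x (-(n:ℤ)) ≠ y (-(n:ℤ))}

/-- Diameter of a subset of the shift space for the Cantor metric. -/
def cDiam {Λ : Type*} (Z : Set (ℤ → Λ)) : ℝ :=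
  ⨆ p : Z × Z, cantorDist (p.1 : ℤ → Λ) (p.2 : ℤ → Λ)

/-- An `ε`-injective map into the shift space (with its Cantor metric). -/
def EpsInjShift {X Λ : Type*} [MetricSpace X] (φ : X → (ℤ → Λ)) (ε : ℝ) : Prop :=
  ∃ δ > (0:ℝ), ∀ Z : Set (ℤ → Λ), cDiam Z < δ → Metric.diam (φ ⁻¹' Z) < ε

/-- The pseudometric `d_N` on the shift space. -/
def dN {Λ : Type*} (N : ℕ) (x y : ℤ → Λ) : ℝ :=
  ⨆ n : {m : ℕ // N ≤ m},
    (Nat.card ↥{i : ℤ | i.natAbs ≤ (n:ℕ) ∧ x i ≠ y i} : ℝ) / (2 * (n:ℕ) + 1)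

/-- The Besicovitch pseudometric `d_∞ = lim_N d_N` on the shift space. -/
def dB {Λ : Type*} (x y : ℤ → Λ) : ℝ := ⨅ N : ℕ, dN N x y

/-- Cylinder sets on the coordinates `0, …, N-1`. -/
def cylinders (Λ : Type*) : Set (Set (ℤ → Λ)) :=
  {C | ∃ (N : ℕ) (w : ℕ → Λ), C = {y : ℤ → Λ | ∀ i : ℕ, i < N → y (i:ℤ) = w i}}

/-- An enumeration of the cylinder sets. -/
def IsCylEnum {Λ : Type*} (A : ℕ → Set (ℤ → Λ)) : Prop :=
  (∀ n, A n ∈ cylinders Λ) ∧ ∀ C ∈ cylinders Λ, ∃ n, A n = C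

/-- The metric `d_*` on probability measures associated to an enumeration of cylinders. -/
def dStar {Λ : Type*} [MeasurableSpace Λ] (A : ℕ → Set (ℤ → Λ))
    (μ ν : ProbabilityMeasure (ℤ → Λ)) : ℝ :=
  ∑' n : ℕ, |((μ (A n) : ℝ≥0) : ℝ) - ((ν (A n) : ℝ≥0) : ℝ)| / 2 ^ n

/-- The Hausdorff distance `d_H` associated to `d_*`. -/
def dHaus {Λ : Type*} [MeasurableSpace Λ] (A : ℕ → Set (ℤ → Λ))
    (S₁ S₂ : Set (ProbabilityMeasure (ℤ → Λ))) : ℝ :=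
  max (⨆ μ ∈ S₁, ⨅ ν ∈ S₂, dStar A μ ν) (⨆ ν ∈ S₂, ⨅ μ ∈ S₁, dStar A μ ν)

/-- The `n`-th empirical measure `(1/n) ∑_{k<n} δ_{T^k x}` (at time `n+1` so that it is
a probability measure). -/
def empMeas {X : Type*} [MeasurableSpace X] (T : X → X) (x : X) (n : ℕ) : Measure X :=
  (((n:ℝ≥0∞))⁻¹) • ∑ k ∈ Finset.range n, Measure.dirac (T^[k] x)

lemma empMeas_isProb {X : Type*} [MeasurableSpace X] (T : X → X) (x : X) (n : ℕ)
    (hn : n ≠ 0) : IsProbabilityMeasure (empMeas T x n) := by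
  constructor
  simp only [empMeas, Measure.smul_apply, Measure.coe_finset_sum, Finset.sum_apply,
    Measure.dirac_apply' _ MeasurableSet.univ, smul_eq_mul]
  simp only [Set.indicator_univ, Pi.one_apply, Finset.sum_const, Finset.card_range,
    nsmul_eq_mul, mul_one]
  exact ENNReal.inv_mul_cancel (by exact_mod_cast hn) (by simp)

/-- The empirical measures as probability measures. -/
def empPM {X : Type*} [MeasurableSpace X] (T : X → X) (x : X) (n : ℕ) :
    ProbabilityMeasure X :=
  ⟨empMeas T x (n + 1), empMeas_isProb T x (n + 1) (Nat.succ_ne_zero n)⟩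

/-- `φ(x)` : the set of accumulation points of the sequence of empirical measures at `x`. -/
def empCluster {X : Type*} [MeasurableSpace X] [TopologicalSpace X] [OpensMeasurableSpace X]
    (T : X → X) (x : X) : Set (ProbabilityMeasure X) :=
  {μ | MapClusterPt μ atTop (fun n : ℕ => empPM T x n)}

/-- A topological extension : a continuous surjective equivariant map. -/
def IsTopExtension {Y X : Type*} [TopologicalSpace Y] [TopologicalSpace X]
    (π : Y → X) (S : Y → Y) (T : X → X) : Prop :=
  Continuous π ∧ Function.Surjective π ∧ ∀ y, π (S y) = T (π y)

/-- A principal extension : entropies of invariant measures are preserved. -/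
def IsPrincipalExt {Y X : Type*} [MeasurableSpace Y] [MeasurableSpace X]
    (π : Y → X) (S : Y → Y) (T : X → X) : Prop :=
  ∀ ν : Measure Y, IsProbabilityMeasure ν →
    (∀ s : Set Y, MeasurableSet s → ν (S ⁻¹' s) = ν s) →
    ksEntropy S ν = ksEntropy T (ν.map π)

/-- A faithful extension : the induced map on invariant measures is a homeomorphism
onto `M(X,T)`. -/
def IsFaithfulExt {Y X : Type*} [MeasurableSpace Y] [MeasurableSpace X]
    [TopologicalSpace Y] [TopologicalSpace X] [OpensMeasurableSpace Y] [OpensMeasurableSpace X]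
    (π : Y → X) (S : Y → Y) (T : X → X) : Prop :=
  IsEmbedding (inducedMap S π) ∧ range (inducedMap S π) = invProb T

/-- A strongly faithful extension : faithful, and periodic points of least period `n`
are mapped onto each other. -/
def IsStronglyFaithfulExt {Y X : Type*} [MeasurableSpace Y] [MeasurableSpace X]
    [TopologicalSpace Y] [TopologicalSpace X] [OpensMeasurableSpace Y] [OpensMeasurableSpace X]
    (π : Y → X) (S : Y → Y) (T : X → X) : Prop :=
  IsFaithfulExt π S T ∧ ∀ n : ℕ, 1 ≤ n → π '' leastPer S n = leastPer T n

/-- Zero-dimensionality : a basis of clopen sets. -/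
def ZeroDim (X : Type*) [TopologicalSpace X] : Prop :=
  ∃ B : Set (Set X), TopologicalSpace.IsTopologicalBasis B ∧ ∀ s ∈ B, IsClopen s

end Krieger

open Krieger

/-!
Cover `Y` by finitely many basic sets of diameter `< δ` and make them disjoint. Pulling the
resulting partition back by `ψ` gives pieces of diameter `< ε` by `ε`-injectivity, and the
boundary of each piece lies in finitely many of the null sets `∂ ψ⁻¹(s)`, `s` basic.
-/

namespace Krieger

section NullSet

variable {X : Type*} [MeasurableSpace X] {T : X → X}

theorem IsNullSet.mono {A B : Set X} (h : A ⊆ B) (hB : IsNullSet T B) : IsNullSet T A :=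
  fun μ hμ herg => measure_mono_null h (hB μ hμ herg)

theorem IsNullSet.union {A B : Set X} (hA : IsNullSet T A) (hB : IsNullSet T B) :
    IsNullSet T (A ∪ B) :=
  fun μ hμ herg => measure_union_null (hA μ hμ herg) (hB μ hμ herg)

variable [TopologicalSpace X]

theorem IsNullSet.frontier_diff {A B : Set X} (hA : IsNullSet T (frontier A))
    (hB : IsNullSet T (frontier B)) : IsNullSet T (frontier (A \ B)) :=
  (hA.union hB).mono <| (frontier_inter_subset A Bᶜ).trans <|
    union_subset_union inter_subset_left (frontier_compl B ▸ inter_subset_right)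

theorem isNullSet_frontier_preimage_disjointed {Y ι : Type*} [Preorder ι]
    [LocallyFiniteOrderBot ι] {ψ : X → Y} {s : ι → Set Y}
    (hs : ∀ i, IsNullSet T (frontier (ψ ⁻¹' s i))) (i : ι) :
    IsNullSet T (frontier (ψ ⁻¹' disjointed s i)) :=
  disjointedRec (p := fun t => IsNullSet T (frontier (ψ ⁻¹' t)))
    (fun _ j ht => by simpa only [preimage_sdiff] using ht.frontier_diff (hs j)) (hs i)

end NullSet

end Krieger

theorem TopologicalSpace.IsTopologicalBasis.exists_fin_cover_diam_lt {Y : Type*}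
    [PseudoMetricSpace Y] [CompactSpace Y] {B : Set (Set Y)}
    (hB : TopologicalSpace.IsTopologicalBasis B) {δ : ℝ} (hδ : 0 < δ) :
    ∃ (n : ℕ) (s : Fin n → Set Y),
      (∀ i, s i ∈ B ∧ Metric.diam (s i) < δ) ∧ ⋃ i, s i = univ := by
  have hsmall : univ ⊆ ⋃ s ∈ {s ∈ B | Metric.diam s < δ}, id s := by
    intro y _
    obtain ⟨s, hsB, hys, hsub⟩ := hB.exists_subset_of_mem_open
      (Metric.mem_ball_self (by positivity : 0 < δ / 3)) Metric.isOpen_ball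
    refine mem_biUnion ⟨hsB, ?_⟩ hys
    calc Metric.diam s ≤ Metric.diam (Metric.ball y (δ / 3)) :=
          Metric.diam_mono hsub Metric.isBounded_ball
      _ ≤ 2 * (δ / 3) := Metric.diam_ball (by positivity)
      _ < δ := by linarith
  obtain ⟨b, hbB, hbfin, hbcover⟩ :=
    isCompact_univ.elim_finite_subcover_image (fun s hs => hB.isOpen hs.1) hsmall
  obtain ⟨n, s, rfl⟩ := hbfin.fin_embedding
  refine ⟨n, s, fun i => hbB (mem_range_self i), ?_⟩
  simpa only [biUnion_range, id, univ_subset_iff] using hbcover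

theorem statement_3_general {X Y : Type*} [MetricSpace X] [MeasurableSpace X]
    [MetricSpace Y] [CompactSpace Y] [MeasurableSpace Y]
    (T : X ≃ₜ X)
    (h : ∀ ε > (0:ℝ), ∃ ψ : X → Y, Measurable ψ ∧ EssCont ⇑T ψ ∧ EpsInjective ψ ε) :
    SBP ⇑T := by
  intro ε hε
  obtain ⟨ψ, -, ⟨B, hB, -, hBnull⟩, δ, hδ, hψ⟩ := h ε hε
  obtain ⟨n, s, hs, hcover⟩ := hB.exists_fin_cover_diam_lt hδ
  refine ⟨Finset.univ.image fun i => ψ ⁻¹' disjointed s i, ?_, ?_, ?_, ?_⟩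
  · simp [← preimage_iUnion, iUnion_disjointed, hcover]
  · simp only [Finset.forall_mem_image, Finset.mem_univ, forall_const]
    intro i j hne
    have hij : i ≠ j := fun hij => hne (hij ▸ rfl)
    exact ((disjoint_disjointed s hij).preimage ψ).inter_eq
  · simp only [Finset.forall_mem_image, Finset.mem_univ, forall_const]
    exact isNullSet_frontier_preimage_disjointed fun i => hBnull _ (hs i).1
  · simp only [Finset.forall_mem_image, Finset.mem_univ, forall_const]
    exact fun i => hψ _ <|
      (Metric.diam_mono (disjointed_subset s i) Metric.isBounded_of_compactSpace).trans_lt (hs i).2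

/-- If for every `ε > 0` there is an essentially continuous `ε`-injective
map from `X` to a zero-dimensional compact metrizable space `Y`, then `(X,T)` has the small
boundary property. -/
theorem statement_3 {X Y : Type*} [MetricSpace X] [CompactSpace X] [MeasurableSpace X]
    [BorelSpace X] [MetricSpace Y] [CompactSpace Y] [MeasurableSpace Y] [BorelSpace Y]
    (T : X ≃ₜ X) (hY : ZeroDim Y)
    (h : ∀ ε > (0:ℝ), ∃ ψ : X → Y, Measurable ψ ∧ EssCont ⇑T ψ ∧ EpsInjective ψ ε) :
    SBP ⇑T :=
  statement_3_general T h
end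
end

section
/- Let (X,T) be a zero-dimensional topological dynamical system. Then for every sequence (n_k)_{k≥1} of positive integers and every sequence (ε_k)_{k≥1} of positive real numbers there exist a sequence (U_k)_{k≥1} of clopen subsets of X and a sequence (P_k)_{k≥1} of clopen subsets of X, where each P_k contains the set ⋃_{n ≤ n_k} Per_n(X,T) of periodic points of least period at most n_k and is contained in its ε_k-neighborhood, such that for every k: (i) the sets U_k, T U_k, …, T^{n_k − 1} U_k are pairwise disjoint; (ii) ⋃_{|i| < n'_k} T^i U_k = X \ P_k, where n'_k := n_1 + ⋯ + n_k; (iii) U_{k+1} = U'_{k+1} ∪ U''_{k+1} for some sets U'_{k+1} ⊆ U_k and U''_{k+1} ⊆ P_k. -/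
open MeasureTheory Filter Topology Set
open scoped ENNReal NNReal Classical

noncomputable section

open Krieger

/-!
The sets are built level by level. Given `U_k` and `P_k`, the clopen set `S = U_k ∪ P_k` meets
every orbit segment of length `2 n'_k - 1`. The points of `S` that lie orbit-close to points far
from the periodic points of period `≤ n_{k+1}` form a compact set of such non-periodic points.
By zero-dimensionality, each of them has a clopen neighbourhood that is disjoint from its first
`n_{k+1} - 1` images, and finitely many of these cover the compact set. Making them disjoint
greedily gives the marker `U_{k+1} ⊆ S`, and `P_{k+1}` is the complement of its
`n'_{k+1}`-orbit neighbourhood. `P_{k+1}` contains the periodic points because `U_{k+1}`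
avoids them, and it lies within `ε_{k+1}` of them because every point far from them is at most
`(n'_k - 1) + (n_{k+1} - 1)` steps from `U_{k+1}`.
-/

namespace NestedMarker

open Function Metric

section Orbit

variable {X : Type*}

def orbitUnion (e : Equiv.Perm X) (N : ℕ) (U : Set X) : Set X :=
  ⋃ (i : ℤ) (_ : i.natAbs < N), ⇑(e ^ i) '' U

variable (e : Equiv.Perm X) {N : ℕ} {U V : Set X}

lemma mem_orbitUnion {x : X} :
    x ∈ orbitUnion e N U ↔ ∃ i : ℤ, i.natAbs < N ∧ ∃ u ∈ U, (e ^ i) u = x := by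
  simp only [orbitUnion, mem_iUnion, mem_image, exists_prop]

lemma zpow_apply_mem_orbitUnion {i : ℤ} (hi : i.natAbs < N) {x : X} (hx : x ∈ U) :
    (e ^ i) x ∈ orbitUnion e N U :=
  (mem_orbitUnion e).2 ⟨i, hi, x, hx, rfl⟩

lemma mem_orbitUnion_of_zpow_apply_mem {i : ℤ} (hi : i.natAbs < N) {x : X}
    (hx : (e ^ i) x ∈ U) : x ∈ orbitUnion e N U :=
  (mem_orbitUnion e).2 ⟨-i, by rwa [Int.natAbs_neg], _, hx, by simp [zpow_neg]⟩

lemma orbitUnion_mono (h : U ⊆ V) : orbitUnion e N U ⊆ orbitUnion e N V :=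
  iUnion₂_mono fun _ _ => image_mono h

lemma subset_orbitUnion (hN : 0 < N) : U ⊆ orbitUnion e N U := fun x hx => by
  simpa using zpow_apply_mem_orbitUnion e (i := 0) hN hx

lemma orbitUnion_orbitUnion_subset {r n : ℕ} (h : r + n ≤ N + 1) :
    orbitUnion e r (orbitUnion e n U) ⊆ orbitUnion e N U := by
  intro x hx
  obtain ⟨i, hi, y, hy, rfl⟩ := (mem_orbitUnion e).1 hx
  obtain ⟨j, hj, u, hu, rfl⟩ := (mem_orbitUnion e).1 hy
  rw [← Equiv.Perm.mul_apply, ← zpow_add]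
  exact zpow_apply_mem_orbitUnion e (by omega) hu

lemma orbitUnion_union_compl_eq_univ (hN : 0 < N) :
    orbitUnion e N (U ∪ (orbitUnion e N U)ᶜ) = univ := by
  refine eq_univ_of_forall fun x => ?_
  by_cases hx : x ∈ orbitUnion e N U
  · exact orbitUnion_mono e subset_union_left hx
  · exact subset_orbitUnion e hN (subset_union_right hx)

/-- The points of `A` that lie less than `n` orbit steps from `U` have been removed, so no new
point is an `m`-th image of an old one or conversely. -/
lemma disjoint_pow_image_union_sdiff_orbitUnion {A : Set X} {m n : ℕ} (hmn : m < n)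
    (hU : Disjoint U (⇑(e ^ m) '' U)) (hA : Disjoint A (⇑(e ^ m) '' A)) :
    Disjoint (U ∪ A \ orbitUnion e n U) (⇑(e ^ m) '' (U ∪ A \ orbitUnion e n U)) := by
  have hm : (m : ℤ).natAbs < n := by omega
  rw [image_union, disjoint_union_left, disjoint_union_right, disjoint_union_right]
  refine ⟨⟨hU, ?_⟩, ?_, hA.mono sdiff_subset (image_mono sdiff_subset)⟩
  · rw [disjoint_left]
    rintro _ hz ⟨w, ⟨-, hw⟩, rfl⟩
    exact hw (mem_orbitUnion_of_zpow_apply_mem e hm (by rwa [zpow_natCast]))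
  · rw [disjoint_right]
    rintro _ ⟨u, hu, rfl⟩ ⟨-, hz⟩
    exact hz (by simpa using zpow_apply_mem_orbitUnion e hm hu)

lemma disjoint_iterate_image_of_ne {f : X → X} (hf : Injective f) {n : ℕ}
    (hU : ∀ m, 0 < m → m < n → Disjoint U (f^[m] '' U)) {i j : ℕ} (hi : i < n) (hj : j < n)
    (hij : i ≠ j) : Disjoint (f^[i] '' U) (f^[j] '' U) := by
  wlog hlt : i < j generalizing i j
  · exact (this hj hi hij.symm (by omega)).symm
  obtain ⟨m, rfl⟩ := Nat.exists_eq_add_of_lt hlt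
  rw [add_assoc, iterate_add, image_comp, disjoint_image_iff (hf.iterate i)]
  exact hU _ (by omega) (by omega)

end Orbit

section Periodic

variable {X : Type*}

def periodicPtsUpTo (f : X → X) (n : ℕ) : Set X :=
  {x | 1 ≤ minimalPeriod f x ∧ minimalPeriod f x ≤ n}

lemma mem_periodicPtsUpTo {f : X → X} {n : ℕ} {x : X} :
    x ∈ periodicPtsUpTo f n ↔ ∃ p ∈ Finset.Icc 1 n, IsPeriodicPt f p x := by
  refine ⟨fun h => ⟨_, Finset.mem_Icc.2 h, isPeriodicPt_minimalPeriod f x⟩, ?_⟩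
  rintro ⟨p, hp, hpx⟩
  obtain ⟨hp1, hpn⟩ := Finset.mem_Icc.1 hp
  exact ⟨minimalPeriod_pos_of_mem_periodicPts ⟨p, hp1, hpx⟩,
    (hpx.minimalPeriod_le hp1).trans hpn⟩

lemma isClosed_periodicPtsUpTo [TopologicalSpace X] [T2Space X] {f : X → X}
    (hf : Continuous f) (n : ℕ) : IsClosed (periodicPtsUpTo f n) := by
  have : periodicPtsUpTo f n = ⋃ p ∈ Finset.Icc 1 n, {x | IsPeriodicPt f p x} := by
    ext x; simp only [mem_periodicPtsUpTo, mem_iUnion, mem_ofPred_eq, exists_prop]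
  rw [this]
  exact isClosed_biUnion_finset fun p _ => isClosed_eq (hf.iterate p) continuous_id

lemma zpow_apply_mem_periodicPtsUpTo_iff (e : Equiv.Perm X) (i : ℤ) {n : ℕ} {x : X} :
    (e ^ i) x ∈ periodicPtsUpTo e n ↔ x ∈ periodicPtsUpTo e n := by
  have hmaps : ∀ (j : ℤ) (y : X), y ∈ periodicPtsUpTo e n →
      (e ^ j) y ∈ periodicPtsUpTo e n := by
    intro j y hy
    obtain ⟨p, hp, hpy⟩ := mem_periodicPtsUpTo.1 hy
    have hcomm : Semiconj ⇑(e ^ j) e e := fun z => by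
      simpa using Equiv.Perm.zpow_apply_comm e j 1 (x := z)
    exact mem_periodicPtsUpTo.2 ⟨p, hp, hpy.map hcomm⟩
  refine ⟨fun h => ?_, hmaps i x⟩
  simpa [zpow_neg] using hmaps (-i) _ h

end Periodic

section Topology

variable {X : Type*} [TopologicalSpace X] (T : X ≃ₜ X) {N : ℕ} {U : Set X}

lemma coe_toEquiv_zpow (i : ℤ) : ⇑(T.toEquiv ^ i) = ⇑(T ^ i) :=
  (congrArg (⇑) (map_zpow
    (MonoidHom.mk' Homeomorph.toEquiv fun _ _ => rfl : (X ≃ₜ X) →* Equiv.Perm X) T i)).symm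

lemma finite_setOf_natAbs_lt (N : ℕ) : {i : ℤ | i.natAbs < N}.Finite :=
  (finite_Ioo (-(N : ℤ)) N).subset fun i hi => by
    simp only [mem_ofPred_eq, mem_Ioo] at hi ⊢
    omega

lemma isClosed_orbitUnion (hU : IsClosed U) : IsClosed (orbitUnion T.toEquiv N U) :=
  (finite_setOf_natAbs_lt N).isClosed_biUnion fun i _ => by
    rw [coe_toEquiv_zpow]; exact (T ^ i).isClosedMap _ hU

lemma isClopen_orbitUnion (hU : IsClopen U) : IsClopen (orbitUnion T.toEquiv N U) :=
  ⟨isClosed_orbitUnion T hU.isClosed, isOpen_biUnion fun i _ => by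
    rw [coe_toEquiv_zpow]; exact (T ^ i).isOpenMap _ hU.isOpen⟩

end Topology

section Marker

variable {X : Type*} [TopologicalSpace X]

lemma eventually_smallSets_disjoint_image [T2Space X] {f : X → X} (hf : Continuous f) {y : X}
    (hy : f y ≠ y) : ∀ᶠ A in (𝓝 y).smallSets, Disjoint A (f '' A) := by
  obtain ⟨V, hV, W, hW, hVW⟩ := Filter.disjoint_iff.1 (disjoint_nhds_nhds.2 hy.symm)
  refine (Filter.eventually_smallSets' fun A B hAB hB => hB.mono hAB (image_mono hAB)).2
    ⟨V ∩ f ⁻¹' W, Filter.inter_mem hV (hf.continuousAt.preimage_mem_nhds hW), ?_⟩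
  exact hVW.mono inter_subset_left
    ((image_mono inter_subset_right).trans (image_preimage_subset f W))

lemma exists_isClopen_disjoint_iterate_image [T2Space X] (hzero : ZeroDim X) {f : X → X}
    (hf : Continuous f) {n : ℕ} {O : Set X} (hO : IsOpen O) {y : X} (hyO : y ∈ O)
    (hy : ∀ m, 0 < m → m < n → f^[m] y ≠ y) :
    ∃ A, IsClopen A ∧ y ∈ A ∧ A ⊆ O ∧ ∀ m, 0 < m → m < n → Disjoint A (f^[m] '' A) := by
  obtain ⟨B, hB, hBc⟩ := hzero
  have hev : ∀ᶠ A in (𝓝 y).smallSets,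
      A ⊆ O ∧ ∀ m ∈ Finset.Ioo 0 n, Disjoint A (f^[m] '' A) :=
    (Filter.eventually_smallSets_subset.2 (hO.mem_nhds hyO)).and <|
      (Filter.eventually_all_finset _).2 fun m hm => by
        obtain ⟨hm0, hmn⟩ := Finset.mem_Ioo.1 hm
        exact eventually_smallSets_disjoint_image (hf.iterate m) (hy m hm0 hmn)
  obtain ⟨A, ⟨hAB, hyA⟩, hA⟩ := hB.nhds_hasBasis.smallSets.eventually_iff.1 hev
  obtain ⟨hAO, hAdisj⟩ := hA (subset_refl A)
  exact ⟨A, hBc A hAB, hyA, hAO, fun m hm0 hmn => hAdisj m (Finset.mem_Ioo.2 ⟨hm0, hmn⟩)⟩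

/-- The greedy construction: `U` is enlarged by the part of each new `A i` that lies outside
the `n`-orbit-neighbourhood of the current `U`. -/
lemma exists_isClopen_marker_of_finset (T : X ≃ₜ X) {n : ℕ} (hn : 0 < n) {ι : Type*}
    (t : Finset ι) {A : ι → Set X} (hAc : ∀ i ∈ t, IsClopen (A i))
    (hA : ∀ i ∈ t, ∀ m, 0 < m → m < n → Disjoint (A i) (⇑(T.toEquiv ^ m) '' A i)) :
    ∃ U, IsClopen U ∧ U ⊆ ⋃ i ∈ t, A i ∧
      (∀ m, 0 < m → m < n → Disjoint U (⇑(T.toEquiv ^ m) '' U)) ∧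
      ⋃ i ∈ t, A i ⊆ orbitUnion T.toEquiv n U := by
  classical
  induction t using Finset.induction_on with
  | empty => exact ⟨∅, isClopen_empty, empty_subset _, by simp, by simp⟩
  | insert a t _ ih =>
    obtain ⟨U, hUc, hUA, hUdisj, hAU⟩ := ih (fun i hi => hAc i (Finset.mem_insert_of_mem hi))
      (fun i hi => hA i (Finset.mem_insert_of_mem hi))
    set D := orbitUnion T.toEquiv n U
    have hUU' : U ⊆ U ∪ A a \ D := subset_union_left
    refine ⟨U ∪ A a \ D, hUc.union ((hAc a (Finset.mem_insert_self a t)).diff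
      (isClopen_orbitUnion T hUc)), ?_, fun m hm0 hmn =>
      disjoint_pow_image_union_sdiff_orbitUnion _ hmn (hUdisj m hm0 hmn)
        (hA a (Finset.mem_insert_self a t) m hm0 hmn), ?_⟩
    · rw [Finset.set_biUnion_insert]
      exact union_subset (hUA.trans subset_union_right) (sdiff_subset.trans subset_union_left)
    · have hDD' : D ⊆ orbitUnion T.toEquiv n (U ∪ A a \ D) := orbitUnion_mono _ hUU'
      rw [Finset.set_biUnion_insert]
      refine union_subset (fun x hx => ?_) (hAU.trans hDD')
      by_cases hxD : x ∈ D
      · exact hDD' hxD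
      · exact subset_orbitUnion _ hn (subset_union_right ⟨hx, hxD⟩)

lemma exists_isClopen_marker [T2Space X] (T : X ≃ₜ X) (hzero : ZeroDim X) {n : ℕ}
    (hn : 0 < n) {K O : Set X} (hK : IsCompact K) (hO : IsOpen O) (hKO : K ⊆ O)
    (hOaper : ∀ y ∈ O, ∀ m, 0 < m → m < n → (⇑T)^[m] y ≠ y) :
    ∃ U, IsClopen U ∧ U ⊆ O ∧ (∀ m, 0 < m → m < n → Disjoint U ((⇑T)^[m] '' U)) ∧
      K ⊆ orbitUnion T.toEquiv n U := by
  choose A hAc hyA hAO hAdisj using fun y (hy : y ∈ K) =>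
    exists_isClopen_disjoint_iterate_image hzero T.continuous hO (hKO hy) (hOaper y (hKO hy))
  obtain ⟨t, hKt⟩ :=
    hK.elim_nhds_subcover' A fun y hy => (hAc y hy).isOpen.mem_nhds (hyA y hy)
  obtain ⟨U, hUc, hUA, hUdisj, hAU⟩ := exists_isClopen_marker_of_finset T hn t
    (A := fun y => A y y.2) (fun y _ => hAc y y.2) (fun y _ => hAdisj y y.2)
  exact ⟨U, hUc, hUA.trans (iUnion₂_subset fun y _ => hAO y y.2), hUdisj, hKt.trans hAU⟩

end Marker

section Level

variable {X : Type*} [MetricSpace X]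

structure IsMarkerSet (T : X ≃ₜ X) (n N : ℕ) (ε : ℝ) (U : Set X) : Prop where
  isClopen : IsClopen U
  disjoint_iterate_image : ∀ m, 0 < m → m < n → Disjoint U ((⇑T)^[m] '' U)
  periodicPtsUpTo_subset : periodicPtsUpTo T n ⊆ (orbitUnion T.toEquiv N U)ᶜ
  compl_subset_thickening :
    (orbitUnion T.toEquiv N U)ᶜ ⊆ thickening ε (periodicPtsUpTo T n)

/-- The marker lemma is applied to the points of `S` that are `r`-orbit-close to a point far
from `periodicPtsUpTo T n`; every point far from it is then `(r + n - 1)`-orbit-close to `U`. -/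
lemma exists_isMarkerSet_subset [CompactSpace X] (T : X ≃ₜ X) (hzero : ZeroDim X) {r n N : ℕ}
    (hn : 0 < n) (hrN : r + n ≤ N + 1) {ε : ℝ} (hε : 0 < ε) {S : Set X} (hS : IsClopen S)
    (hSX : orbitUnion T.toEquiv r S = univ) :
    ∃ U ⊆ S, IsMarkerSet T n N ε U := by
  set Per := periodicPtsUpTo T n
  set K := S ∩ orbitUnion T.toEquiv r (thickening ε Per)ᶜ
  have hK : IsCompact K :=
    (hS.isClosed.inter (isClosed_orbitUnion T isOpen_thickening.isClosed_compl)).isCompact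
  have hO : IsOpen (S ∩ Perᶜ) :=
    hS.isOpen.inter (isClosed_periodicPtsUpTo T.continuous n).isOpen_compl
  have hKO : K ⊆ S ∩ Perᶜ := by
    rintro y ⟨hyS, hy⟩
    obtain ⟨i, -, z, hz, rfl⟩ := (mem_orbitUnion _).1 hy
    exact ⟨hyS, fun hPer => hz (self_subset_thickening hε _
      ((zpow_apply_mem_periodicPtsUpTo_iff _ i).1 hPer))⟩
  have hOaper : ∀ y ∈ S ∩ Perᶜ, ∀ m, 0 < m → m < n → (⇑T)^[m] y ≠ y :=
    fun y hy m hm0 hmn hmy =>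
      hy.2 (mem_periodicPtsUpTo.2 ⟨m, Finset.mem_Icc.2 ⟨hm0, hmn.le⟩, hmy⟩)
  obtain ⟨U, hUc, hUO, hUdisj, hKU⟩ := exists_isClopen_marker T hzero hn hK hO hKO hOaper
  refine ⟨U, hUO.trans inter_subset_left, hUc, hUdisj, fun x hx hxU => ?_, fun x hx => ?_⟩
  · obtain ⟨i, -, u, hu, rfl⟩ := (mem_orbitUnion _).1 hxU
    exact (hUO hu).2 ((zpow_apply_mem_periodicPtsUpTo_iff _ i).1 hx)
  · by_contra hxPer
    obtain ⟨i, hi, s, hs, rfl⟩ := (mem_orbitUnion _).1 (hSX.symm ▸ mem_univ x)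
    have hsK : s ∈ K := ⟨hs, mem_orbitUnion_of_zpow_apply_mem _ hi hxPer⟩
    exact hx (orbitUnion_orbitUnion_subset _ hrN (zpow_apply_mem_orbitUnion _ hi (hKU hsK)))

end Level

lemma exists_seq_of_exists_succ {α : Type*} (p : ℕ → α → Prop) (R : ℕ → α → α → Prop)
    (h0 : ∃ a, p 0 a) (hsucc : ∀ k a, p k a → ∃ b, p (k + 1) b ∧ R k a b) :
    ∃ f : ℕ → α, ∀ k, p k (f k) ∧ R k (f k) (f (k + 1)) := by
  obtain ⟨a₀, ha₀⟩ := h0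
  choose g hg hR using hsucc
  let f : ∀ k, {a // p k a} := fun k =>
    Nat.rec ⟨a₀, ha₀⟩ (fun k a => ⟨g k a a.2, hg k a a.2⟩) k
  exact ⟨fun k => (f k).1, fun k => ⟨(f k).2, hR k _ (f k).2⟩⟩

end NestedMarker

open NestedMarker

/-- The nested marker property for zero-dimensional systems. -/
theorem statement_6 {X : Type*} [MetricSpace X] [CompactSpace X]
    (T : X ≃ₜ X) (hzero : ZeroDim X)
    (nseq : ℕ → ℕ) (hn : ∀ k, 1 ≤ nseq k) (εseq : ℕ → ℝ) (hε : ∀ k, 0 < εseq k) :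
    ∃ U P : ℕ → Set X,
      (∀ k, IsClopen (U k)) ∧ (∀ k, IsClopen (P k)) ∧
      -- `P k` contains the periodic points of least period at most `n_k` …
      (∀ k, {x | 1 ≤ Function.minimalPeriod ⇑T x ∧ Function.minimalPeriod ⇑T x ≤ nseq k}
        ⊆ P k) ∧
      -- … and is contained in their `ε_k`-neighborhood
      (∀ k, P k ⊆ {x | ∃ y, (1 ≤ Function.minimalPeriod ⇑T y ∧
        Function.minimalPeriod ⇑T y ≤ nseq k) ∧ dist x y < εseq k}) ∧
      -- (i) the iterates `U_k, T U_k, …, T^{n_k - 1} U_k` are pairwise disjoint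
      (∀ k, ∀ i < nseq k, ∀ j < nseq k, i ≠ j →
        Disjoint ((⇑T)^[i] '' U k) ((⇑T)^[j] '' U k)) ∧
      -- (ii) `⋃_{|i| < n'_k} T^i U_k = X \ P_k` where `n'_k = n_1 + ⋯ + n_k`
      (∀ k, (⋃ (i : ℤ) (_ : i.natAbs < ∑ l ∈ Finset.range (k+1), nseq l),
        ⇑(T.toEquiv ^ i) '' U k) = Set.univ \ P k) ∧
      -- (iii) `U_{k+1} = U'_{k+1} ∪ U''_{k+1}` with `U'_{k+1} ⊆ U_k` and `U''_{k+1} ⊆ P_k`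
      (∀ k, ∃ U' U'' : Set X, U (k+1) = U' ∪ U'' ∧ U' ⊆ U k ∧ U'' ⊆ P k) := by
  set N : ℕ → ℕ := fun k => ∑ l ∈ Finset.range (k + 1), nseq l
  have hN : ∀ k, 0 < N k := fun k => lt_of_lt_of_le (hn 0)
    (Finset.single_le_sum (fun _ _ => Nat.zero_le _) (Finset.mem_range.2 k.succ_pos))
  have base : ∃ V, IsMarkerSet T (nseq 0) (N 0) (εseq 0) V :=
    (exists_isMarkerSet_subset T hzero (hn 0) (by simp [N, add_comm]) (hε 0) isClopen_univ
      (eq_univ_of_univ_subset (subset_orbitUnion _ one_pos))).imp fun _ h => h.2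
  have step : ∀ k V, IsMarkerSet T (nseq k) (N k) (εseq k) V →
      ∃ W, IsMarkerSet T (nseq (k + 1)) (N (k + 1)) (εseq (k + 1)) W ∧
        W ⊆ V ∪ (orbitUnion T.toEquiv (N k) V)ᶜ := fun k V hV =>
    (exists_isMarkerSet_subset T hzero (hn (k + 1))
      (by simp only [N, Finset.sum_range_succ _ (k + 1)]; omega) (hε (k + 1))
      (hV.isClopen.union (isClopen_orbitUnion T hV.isClopen).compl)
      (orbitUnion_union_compl_eq_univ _ (hN k))).imp fun _ h => ⟨h.2, h.1⟩
  obtain ⟨U, hU⟩ := exists_seq_of_exists_succ _ _ base step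
  refine ⟨U, fun k => (orbitUnion T.toEquiv (N k) (U k))ᶜ, fun k => (hU k).1.isClopen,
    fun k => (isClopen_orbitUnion T (hU k).1.isClopen).compl,
    fun k => (hU k).1.periodicPtsUpTo_subset,
    fun k x hx => Metric.mem_thickening_iff.1 ((hU k).1.compl_subset_thickening hx),
    fun k i hi j hj =>
      disjoint_iterate_image_of_ne T.injective (hU k).1.disjoint_iterate_image hi hj,
    fun k => by rw [Set.sdiff_compl, univ_inter]; rfl,
    fun k => ⟨U (k + 1) ∩ U k, U (k + 1) ∩ _, ?_, inter_subset_right, inter_subset_right⟩⟩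
  rw [← inter_union_distrib_left, inter_eq_left.2 (hU k).2]
end
end

section
/- Let Λ be a finite set, X a compact metrizable space, and let ψ_k : X → Λ^ℤ be continuous maps (for the product topology) converging to a map ψ : X → Λ^ℤ both pointwise with respect to the product topology and uniformly with respect to the family (d_N)_N, i.e. sup_{x∈X} d_N(ψ_k x, ψ x) → 0 as N,k → ∞. Then the closure of ψ(X) in the product topology is contained in the d_∞-saturation ψ(X)^∞ := {y ∈ Λ^ℤ : ∃ x ∈ X, d_∞(y, ψ(x)) = 0}. -/
open MeasureTheory Filter Topology Set
open scoped ENNReal NNReal Classical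

noncomputable section

open Krieger

/-!
Choose `x` as a cluster point of the points `w` with `ψ w` close to `y` (compactness of `X`).
For fixed `k`, continuity of `ψ_k` makes `(y, ψ_k x)` a limit of pairs `(ψ w, ψ_k w)`. Each `d_N`
is a supremum of locally constant window counts, hence lower semicontinuous for the product
topology, so `d_N(y, ψ_k x) ≤ sup_w d_N(ψ w, ψ_k w)`; the triangle inequality through `ψ_k x`
then makes `d_N(y, ψ x)` small for large `N`.
-/

theorem exists_forall_prodMk_mem_closure_range {X Y Z : Type*} [TopologicalSpace X]
    [CompactSpace X] [TopologicalSpace Y] [TopologicalSpace Z] {f : X → Y} {y : Y}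
    (hy : y ∈ closure (range f)) :
    ∃ x, ∀ g : X → Z, Continuous g → (y, g x) ∈ closure (range fun w => (f w, g w)) := by
  have : (comap f (𝓝 y)).NeBot := comap_neBot_iff.2 fun t ht => by
    obtain ⟨_, hz, w, rfl⟩ := mem_closure_iff_nhds.1 hy t ht
    exact ⟨w, hz⟩
  obtain ⟨x, hx⟩ := exists_clusterPt_of_compactSpace (comap f (𝓝 y))
  refine ⟨x, fun g hg => ?_⟩
  have := hx.neBot
  refine mem_closure_of_tendsto (b := 𝓝 x ⊓ comap f (𝓝 y)) ?_
    (Eventually.of_forall fun w => mem_range_self w)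
  rw [nhds_prod_eq]
  exact (tendsto_comap.mono_left inf_le_right).prodMk ((hg.tendsto x).mono_left inf_le_left)

namespace Krieger

variable {Λ : Type*}

def diffCount (n : ℕ) (x y : ℤ → Λ) : ℕ :=
  (Finset.Icc (-(n : ℤ)) n |>.filter fun i => x i ≠ y i).card

theorem natCard_eq_diffCount (n : ℕ) (x y : ℤ → Λ) :
    Nat.card ↥{i : ℤ | i.natAbs ≤ n ∧ x i ≠ y i} = diffCount n x y := by
  have : {i : ℤ | i.natAbs ≤ n ∧ x i ≠ y i} =
      ↑(Finset.Icc (-(n : ℤ)) n |>.filter fun i => x i ≠ y i) := by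
    ext i; simp only [Finset.coe_filter, Finset.mem_Icc]; exact and_congr_left' (by omega)
  rw [this, Nat.card_coe_set_eq, Set.ncard_coe_finset, diffCount]

theorem diffCount_le_two_mul_add_one (n : ℕ) (x y : ℤ → Λ) : diffCount n x y ≤ 2 * n + 1 :=
  (Finset.card_filter_le _ _).trans (by simp only [Int.card_Icc]; omega)

theorem diffCount_comm (n : ℕ) (x y : ℤ → Λ) : diffCount n x y = diffCount n y x := by
  simp only [diffCount, ne_comm]

theorem diffCount_triangle (n : ℕ) (x y z : ℤ → Λ) :
    diffCount n x z ≤ diffCount n x y + diffCount n y z := by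
  unfold diffCount
  refine (Finset.card_le_card ?_).trans (Finset.card_union_le _ _)
  rw [← Finset.filter_or]
  exact Finset.monotone_filter_right _ fun i _ hxz => by
    by_contra! h; exact hxz (h.1.trans h.2)

theorem continuous_diffCount [TopologicalSpace Λ] [DiscreteTopology Λ] (n : ℕ) :
    Continuous fun p : (ℤ → Λ) × (ℤ → Λ) => diffCount n p.1 p.2 := by
  simp only [diffCount, Finset.card_filter]
  exact continuous_finsetSum _ fun i _ =>
    Continuous.comp (g := fun q : Λ × Λ => if q.1 ≠ q.2 then 1 else 0)
      (f := fun p : (ℤ → Λ) × (ℤ → Λ) => (p.1 i, p.2 i)) continuous_of_discreteTopology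
      (by fun_prop)

theorem dN_eq_iSup_diffCount (N : ℕ) (x y : ℤ → Λ) :
    dN N x y = ⨆ n : {m : ℕ // N ≤ m}, (diffCount n x y : ℝ) / (2 * n + 1) := by
  simp only [dN, natCard_eq_diffCount]

theorem bddAbove_range_diffCount_div (N : ℕ) (x y : ℤ → Λ) :
    BddAbove (range fun n : {m : ℕ // N ≤ m} => (diffCount n x y : ℝ) / (2 * n + 1)) := by
  refine ⟨1, forall_mem_range.2 fun n => (div_le_one (by positivity)).2 ?_⟩
  exact_mod_cast diffCount_le_two_mul_add_one n x y

theorem diffCount_div_le_dN {N n : ℕ} (h : N ≤ n) (x y : ℤ → Λ) :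
    (diffCount n x y : ℝ) / (2 * n + 1) ≤ dN N x y := by
  rw [dN_eq_iSup_diffCount]
  exact le_ciSup (bddAbove_range_diffCount_div N x y) ⟨n, h⟩

theorem dN_comm (N : ℕ) (x y : ℤ → Λ) : dN N x y = dN N y x := by
  simp only [dN_eq_iSup_diffCount, diffCount_comm]

theorem dN_triangle (N : ℕ) (x y z : ℤ → Λ) : dN N x z ≤ dN N x y + dN N y z := by
  have : Nonempty {m : ℕ // N ≤ m} := ⟨⟨N, le_rfl⟩⟩
  rw [dN_eq_iSup_diffCount]
  refine ciSup_le fun n => ?_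
  calc (diffCount n x z : ℝ) / (2 * n + 1)
      ≤ (diffCount n x y : ℝ) / (2 * n + 1) + (diffCount n y z : ℝ) / (2 * n + 1) := by
        rw [← add_div]; gcongr; exact_mod_cast diffCount_triangle n x y z
    _ ≤ dN N x y + dN N y z := by
        gcongr <;> exact diffCount_div_le_dN n.2 _ _

theorem lowerSemicontinuous_dN [TopologicalSpace Λ] [DiscreteTopology Λ] (N : ℕ) :
    LowerSemicontinuous fun p : (ℤ → Λ) × (ℤ → Λ) => dN N p.1 p.2 := by
  simp only [dN_eq_iSup_diffCount]
  refine lowerSemicontinuous_ciSup (fun p => bddAbove_range_diffCount_div N p.1 p.2)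
    fun n => Continuous.lowerSemicontinuous ?_
  exact (continuous_of_discreteTopology.comp (continuous_diffCount n)).div_const _

theorem dN_nonneg (N : ℕ) (x y : ℤ → Λ) : 0 ≤ dN N x y :=
  Real.iSup_nonneg fun _ => by positivity

theorem dB_nonneg (x y : ℤ → Λ) : 0 ≤ dB x y :=
  le_ciInf fun N => dN_nonneg N x y

theorem dB_le_dN (N : ℕ) (x y : ℤ → Λ) : dB x y ≤ dN N x y :=
  ciInf_le ⟨0, forall_mem_range.2 fun M => dN_nonneg M x y⟩ N

end Krieger

theorem statement_8_general {Λ : Type*} [TopologicalSpace Λ] [DiscreteTopology Λ]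
    {X : Type*} [MetricSpace X] [CompactSpace X]
    (ψ : X → ℤ → Λ) (ψk : ℕ → X → ℤ → Λ)
    (hcont : ∀ k, Continuous (ψk k))
    (hdN : ∀ ε > (0:ℝ), ∃ K₀ M : ℕ, ∀ k ≥ K₀, ∀ N ≥ M, ∀ x : X, dN N (ψk k x) (ψ x) ≤ ε) :
    closure (Set.range ψ) ⊆ {y : ℤ → Λ | ∃ x : X, dB y (ψ x) = 0} := by
  intro y hy
  obtain ⟨x, hx⟩ := exists_forall_prodMk_mem_closure_range (Z := ℤ → Λ) hy
  refine ⟨x, le_antisymm ?_ (dB_nonneg y (ψ x))⟩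
  refine le_of_forall_pos_le_add fun ε hε => ?_
  obtain ⟨K, M, hKM⟩ := hdN (ε / 2) (half_pos hε)
  have hclosed : IsClosed {p : (ℤ → Λ) × (ℤ → Λ) | dN M p.1 p.2 ≤ ε / 2} :=
    (lowerSemicontinuous_dN M).isClosed_preimage (ε / 2)
  have hrange : (range fun w => (ψ w, ψk K w)) ⊆ {p | dN M p.1 p.2 ≤ ε / 2} :=
    range_subset_iff.2 fun w => (dN_comm M _ _).trans_le (hKM K le_rfl M le_rfl w)
  have hyK : dN M y (ψk K x) ≤ ε / 2 :=
    (closure_minimal hrange hclosed (hx (ψk K) (hcont K)) :)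
  calc dB y (ψ x) ≤ dN M y (ψ x) := dB_le_dN M y (ψ x)
    _ ≤ dN M y (ψk K x) + dN M (ψk K x) (ψ x) := dN_triangle M _ _ _
    _ ≤ 0 + ε := by linarith [hKM K le_rfl M le_rfl x]

/-- If the continuous maps `ψ_k` converge to `ψ` pointwise for the product
topology and uniformly with respect to the family `(d_N)_N`, then the closure of `ψ(X)` is
contained in the `d_∞`-saturation of `ψ(X)`. -/
theorem statement_8 {Λ : Type*} [Fintype Λ] [TopologicalSpace Λ] [DiscreteTopology Λ]
    {X : Type*} [MetricSpace X] [CompactSpace X]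
    (ψ : X → ℤ → Λ) (ψk : ℕ → X → ℤ → Λ)
    (hcont : ∀ k, Continuous (ψk k))
    (hpt : ∀ x : X, Filter.Tendsto (fun k : ℕ => ψk k x) Filter.atTop (nhds (ψ x)))
    (hdN : ∀ ε > (0:ℝ), ∃ K₀ M : ℕ, ∀ k ≥ K₀, ∀ N ≥ M, ∀ x : X, dN N (ψk k x) (ψ x) ≤ ε) :
    closure (Set.range ψ) ⊆ {y : ℤ → Λ | ∃ x : X, dB y (ψ x) = 0} :=
  statement_8_general ψ ψk hcont hdN
end
end

section
/- Let Λ be a finite set, let T be a homeomorphism of a compact metrizable space X, and let ψ, ψ_k : X → Λ^ℤ be Borel equivariant maps (ψ ∘ T = σ ∘ ψ and ψ_k ∘ T = σ ∘ ψ_k) such that sup_{x∈X} d_∞(ψ_k x, ψ x) → 0 as k → ∞. Then the induced maps ψ_k* : M(X,T) → M(Λ^ℤ,σ) converge uniformly on M(X,T) to ψ* with respect to the metric d_*. -/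
open MeasureTheory Filter Topology Set
open scoped ENNReal NNReal Classical

noncomputable section

open Krieger

/-!
Since `ψ_k` and `ψ` are both equivariant and `μ` is invariant, the probability that `ψ_k x` and
`ψ x` differ at coordinate `i` does not depend on `i`. It is therefore the integral of the
proportion of disagreements in the window `[-n, n]`, and the reverse Fatou lemma bounds it by
`sup_x d_∞(ψ_k x, ψ x)`. A cylinder fixing `N` coordinates has `ψ_k`- and `ψ`-preimages differing
in measure by at most `N` times this probability, and `d_*` only sees finitely many cylinders up
to an arbitrarily small tail.
-/

namespace Krieger

open Finset

open scoped symmDiff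

section Discrepancy

variable {Λ : Type*}

-- Chosen so that `dN N x y` is literally `⨆ n ≥ N, discrepancy n x y`.
def discrepancy (n : ℕ) (x y : ℤ → Λ) : ℝ :=
  (Nat.card ↥{i : ℤ | i.natAbs ≤ n ∧ x i ≠ y i} : ℝ) / (2 * n + 1)

lemma natCard_window_eq (n : ℕ) (P : ℤ → Prop) :
    Nat.card ↥{i : ℤ | i.natAbs ≤ n ∧ P i} = #{i ∈ Icc (-n : ℤ) n | P i} := by
  rw [← Nat.card_eq_finsetCard]
  exact Nat.card_congr <| Equiv.subtypeEquivRight fun i => by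
    simp only [Set.mem_ofPred_eq, mem_filter, Finset.mem_Icc]
    exact and_congr_left fun _ => by omega

lemma card_window (n : ℕ) : #(Icc (-n : ℤ) n) = 2 * n + 1 := by
  simp [Int.card_Icc]; omega

lemma discrepancy_le_one (n : ℕ) (x y : ℤ → Λ) : discrepancy n x y ≤ 1 := by
  rw [discrepancy, div_le_one (by positivity), natCard_window_eq]
  exact_mod_cast (card_filter_le _ _).trans_eq (card_window n)

lemma discrepancy_le_dN {N n : ℕ} (h : N ≤ n) (x y : ℤ → Λ) :
    discrepancy n x y ≤ dN N x y :=
  le_ciSup (f := fun m : {m : ℕ // N ≤ m} => discrepancy m x y)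
    ⟨1, by rintro _ ⟨m, rfl⟩; exact discrepancy_le_one _ x y⟩ ⟨n, h⟩

lemma limsup_ofReal_discrepancy_le_dB (x y : ℤ → Λ) :
    limsup (fun n => ENNReal.ofReal (discrepancy n x y)) atTop ≤ ENNReal.ofReal (dB x y) := by
  rw [dB, ENNReal.ofReal_iInf]
  refine le_iInf fun N => limsup_le_of_le (by isBoundedDefault) ?_
  filter_upwards [eventually_ge_atTop N] with n hn
  exact ENNReal.ofReal_le_ofReal (discrepancy_le_dN hn x y)

lemma ofReal_discrepancy_eq (n : ℕ) (x y : ℤ → Λ) :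
    ENNReal.ofReal (discrepancy n x y)
      = (∑ i ∈ Icc (-n : ℤ) n, if x i ≠ y i then 1 else 0) / (2 * n + 1) := by
  rw [discrepancy, ENNReal.ofReal_div_of_pos (by positivity), natCard_window_eq,
    ENNReal.ofReal_natCast, card_filter]
  push_cast
  congr! 2
  exact_mod_cast ENNReal.ofReal_natCast (2 * n + 1)

end Discrepancy

section Disagreement

variable {Λ X : Type*} {T : X → X} {φ ψ : X → ℤ → Λ}

lemma preimage_disagree (hφ : ∀ x, φ (T x) = shift (φ x)) (hψ : ∀ x, ψ (T x) = shift (ψ x))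
    (i : ℤ) : T ⁻¹' {x | φ x i ≠ ψ x i} = {x | φ x (i + 1) ≠ ψ x (i + 1)} := by
  ext x
  simp [hφ, hψ, shift]

lemma ofReal_discrepancy_eq_sum_indicator (n : ℕ) :
    (fun x => ENNReal.ofReal (discrepancy n (φ x) (ψ x)))
      = fun x =>
        (∑ i ∈ Icc (-n : ℤ) n, {x | φ x i ≠ ψ x i}.indicator 1 x) * (2 * n + 1 : ℝ≥0∞)⁻¹ := by
  ext x
  simp [ofReal_discrepancy_eq, Set.indicator_apply, div_eq_mul_inv]

variable [MeasurableSpace Λ] [MeasurableEq Λ] [MeasurableSpace X]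

lemma measurableSet_disagree (hφ : Measurable φ) (hψ : Measurable ψ) (i : ℤ) :
    MeasurableSet {x | φ x i ≠ ψ x i} :=
  (measurableSet_eq_fun hφ.eval hψ.eval).compl

lemma measurable_ofReal_discrepancy (hφ : Measurable φ) (hψ : Measurable ψ) (n : ℕ) :
    Measurable fun x => ENNReal.ofReal (discrepancy n (φ x) (ψ x)) := by
  rw [ofReal_discrepancy_eq_sum_indicator]
  exact (Finset.measurable_sum _ fun i _ =>
    measurable_one.indicator (measurableSet_disagree hφ hψ i)).mul_const _

variable {μ : Measure X}

lemma measure_disagree_eq (hμ : ∀ s, MeasurableSet s → μ (T ⁻¹' s) = μ s)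
    (hφ : Measurable φ) (hψ : Measurable ψ)
    (hφT : ∀ x, φ (T x) = shift (φ x)) (hψT : ∀ x, ψ (T x) = shift (ψ x)) (i : ℤ) :
    μ {x | φ x i ≠ ψ x i} = μ {x | φ x 0 ≠ ψ x 0} := by
  have hsucc (j : ℤ) : μ {x | φ x (j + 1) ≠ ψ x (j + 1)} = μ {x | φ x j ≠ ψ x j} := by
    rw [← preimage_disagree hφT hψT, hμ _ (measurableSet_disagree hφ hψ j)]
  induction i using Int.induction_on with
  | zero => rfl
  | succ j ih => rw [hsucc, ih]
  | pred j ih => rw [← ih, ← hsucc, sub_add_cancel]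

lemma lintegral_ofReal_discrepancy (hμ : ∀ s, MeasurableSet s → μ (T ⁻¹' s) = μ s)
    (hφ : Measurable φ) (hψ : Measurable ψ)
    (hφT : ∀ x, φ (T x) = shift (φ x)) (hψT : ∀ x, ψ (T x) = shift (ψ x)) (n : ℕ) :
    ∫⁻ x, ENNReal.ofReal (discrepancy n (φ x) (ψ x)) ∂μ = μ {x | φ x 0 ≠ ψ x 0} := by
  rw [ofReal_discrepancy_eq_sum_indicator, lintegral_mul_const' _ _ (by simp),
    lintegral_finsetSum _ fun i _ => measurable_one.indicator (measurableSet_disagree hφ hψ i)]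
  simp_rw [lintegral_indicator_one (measurableSet_disagree hφ hψ _),
    measure_disagree_eq hμ hφ hψ hφT hψT, sum_const, card_window, nsmul_eq_mul]
  push_cast
  rw [mul_right_comm, ENNReal.mul_inv_cancel (by positivity) (by finiteness), one_mul]

lemma measure_disagree_le_lintegral_dB [IsFiniteMeasure μ]
    (hμ : ∀ s, MeasurableSet s → μ (T ⁻¹' s) = μ s)
    (hφ : Measurable φ) (hψ : Measurable ψ)
    (hφT : ∀ x, φ (T x) = shift (φ x)) (hψT : ∀ x, ψ (T x) = shift (ψ x)) :
    μ {x | φ x 0 ≠ ψ x 0} ≤ ∫⁻ x, ENNReal.ofReal (dB (φ x) (ψ x)) ∂μ :=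
  calc μ {x | φ x 0 ≠ ψ x 0}
      = limsup (fun n => ∫⁻ x, ENNReal.ofReal (discrepancy n (φ x) (ψ x)) ∂μ) atTop := by
        simp_rw [lintegral_ofReal_discrepancy hμ hφ hψ hφT hψT, limsup_const]
    _ ≤ ∫⁻ x, limsup (fun n => ENNReal.ofReal (discrepancy n (φ x) (ψ x))) atTop ∂μ :=
        limsup_lintegral_le 1 (measurable_ofReal_discrepancy hφ hψ)
          (fun n => ae_of_all _ fun x => ENNReal.ofReal_le_one.2 (discrepancy_le_one n _ _))
          (by simp)
    _ ≤ ∫⁻ x, ENNReal.ofReal (dB (φ x) (ψ x)) ∂μ :=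
        lintegral_mono fun x => limsup_ofReal_discrepancy_le_dB _ _

lemma measureReal_disagree_le [IsProbabilityMeasure μ]
    (hμ : ∀ s, MeasurableSet s → μ (T ⁻¹' s) = μ s)
    (hφ : Measurable φ) (hψ : Measurable ψ)
    (hφT : ∀ x, φ (T x) = shift (φ x)) (hψT : ∀ x, ψ (T x) = shift (ψ x))
    {ε : ℝ} (hε : 0 ≤ ε) (hdB : ∀ x, dB (φ x) (ψ x) ≤ ε) :
    μ.real {x | φ x 0 ≠ ψ x 0} ≤ ε := by
  refine ENNReal.toReal_le_of_le_ofReal hε ?_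
  calc μ {x | φ x 0 ≠ ψ x 0} ≤ ∫⁻ x, ENNReal.ofReal (dB (φ x) (ψ x)) ∂μ :=
        measure_disagree_le_lintegral_dB hμ hφ hψ hφT hψT
    _ ≤ ∫⁻ _, ENNReal.ofReal ε ∂μ := lintegral_mono fun x => ENNReal.ofReal_le_ofReal (hdB x)
    _ = ENNReal.ofReal ε := by simp

end Disagreement

def cylinder {Λ : Type*} (N : ℕ) (w : ℕ → Λ) : Set (ℤ → Λ) :=
  {y | ∀ i : ℕ, i < N → y i = w i}

section Cylinder

variable {Λ X : Type*} {φ ψ : X → ℤ → Λ}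

lemma preimage_cylinder_symmDiff_subset (N : ℕ) (w : ℕ → Λ) :
    (φ ⁻¹' cylinder N w) ∆ (ψ ⁻¹' cylinder N w) ⊆ ⋃ i ∈ range N, {x | φ x i ≠ ψ x i} := by
  intro x hx
  by_contra h
  simp only [Set.mem_iUnion, Finset.mem_range, Set.mem_ofPred_eq, not_exists, not_not] at h
  have hiff : φ x ∈ cylinder N w ↔ ψ x ∈ cylinder N w :=
    forall₂_congr fun i hi => by rw [h i hi]
  simp [Set.mem_symmDiff, hiff] at hx

variable [MeasurableSpace Λ] [MeasurableEq Λ] [MeasurableSpace X]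

lemma measurableSet_cylinder (N : ℕ) (w : ℕ → Λ) : MeasurableSet (cylinder N w) := by
  unfold cylinder
  measurability

lemma abs_measureReal_preimage_cylinder_sub_le {T : X → X} {μ : Measure X} [IsFiniteMeasure μ]
    (hμ : ∀ s, MeasurableSet s → μ (T ⁻¹' s) = μ s)
    (hφ : Measurable φ) (hψ : Measurable ψ)
    (hφT : ∀ x, φ (T x) = shift (φ x)) (hψT : ∀ x, ψ (T x) = shift (ψ x))
    (N : ℕ) (w : ℕ → Λ) :
    |μ.real (φ ⁻¹' cylinder N w) - μ.real (ψ ⁻¹' cylinder N w)|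
      ≤ N * μ.real {x | φ x 0 ≠ ψ x 0} :=
  calc |μ.real (φ ⁻¹' cylinder N w) - μ.real (ψ ⁻¹' cylinder N w)|
      ≤ μ.real ((φ ⁻¹' cylinder N w) ∆ (ψ ⁻¹' cylinder N w)) :=
        abs_measureReal_sub_le_measureReal_symmDiff
          (hφ (measurableSet_cylinder N w)).nullMeasurableSet
          (hψ (measurableSet_cylinder N w)).nullMeasurableSet
    _ ≤ μ.real (⋃ i ∈ range N, {x | φ x i ≠ ψ x i}) :=
        measureReal_mono (preimage_cylinder_symmDiff_subset N w) (measure_ne_top μ _)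
    _ ≤ ∑ i ∈ range N, μ.real {x | φ x i ≠ ψ x i} := measureReal_biUnion_finset_le _ _
    _ = N * μ.real {x | φ x 0 ≠ ψ x 0} := by
        simp [measureReal_def, measure_disagree_eq hμ hφ hψ hφT hψT]

end Cylinder

lemma coe_inducedMap_apply {X Y : Type*} [MeasurableSpace X] [MeasurableSpace Y] {T : X → X}
    {φ : X → Y} (hφ : Measurable φ) (μ : invProb T) {s : Set Y} (hs : MeasurableSet s) :
    (inducedMap T φ μ s : ℝ) = (μ : Measure X).real (φ ⁻¹' s) := by
  have hpush : pushPM φ (μ : ProbabilityMeasure X)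
      = ⟨(μ : Measure X).map φ, Measure.isProbabilityMeasure_map hφ.aemeasurable⟩ :=
    dif_pos hφ.aemeasurable
  rw [inducedMap, hpush, ProbabilityMeasure.mk_apply, Measure.map_apply hφ hs]
  rfl

lemma exists_dStar_le {Λ : Type*} [MeasurableSpace Λ] (A : ℕ → Set (ℤ → Λ)) {ε : ℝ}
    (hε : 0 < ε) : ∃ M : ℕ, ∃ δ > 0, ∀ μ ν : ProbabilityMeasure (ℤ → Λ),
      (∀ n < M, |(μ (A n) : ℝ) - ν (A n)| ≤ δ) → dStar A μ ν ≤ ε := by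
  obtain ⟨M, hM⟩ : ∃ M : ℕ, (1 / 2 : ℝ) ^ M < ε / 4 :=
    exists_pow_lt_of_lt_one (by positivity) (by norm_num)
  refine ⟨M, ε / (2 * (M + 1)), by positivity, fun μ ν hμν => ?_⟩
  set f : ℕ → ℝ := fun n => |(μ (A n) : ℝ) - ν (A n)| / 2 ^ n
  have hf_le_geom (n : ℕ) : f n ≤ (1 / 2) ^ n := by
    rw [one_div_pow]
    refine div_le_div_of_nonneg_right ?_ (by positivity)
    exact abs_sub_le_of_nonneg_of_le (by positivity) (by exact_mod_cast μ.apply_le_one _)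
      (by positivity) (by exact_mod_cast ν.apply_le_one _)
  have hf_nonneg (n : ℕ) : 0 ≤ f n := by positivity
  have hf : Summable f := .of_nonneg_of_le hf_nonneg hf_le_geom summable_geometric_two
  have head : ∑ n ∈ Finset.range M, f n ≤ ε / 2 :=
    calc ∑ n ∈ Finset.range M, f n ≤ ∑ n ∈ Finset.range M, ε / (2 * (M + 1)) :=
          Finset.sum_le_sum fun n hn =>
            (div_le_self (abs_nonneg _) (one_le_pow₀ (by norm_num))).trans
              (hμν n (Finset.mem_range.1 hn))
      _ = M * ε / (2 * (M + 1)) := by simp [mul_div_assoc]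
      _ ≤ ε / 2 := by
          rw [div_le_div_iff₀ (by positivity) (by positivity)]
          nlinarith
  have tail : ∑' n, f (n + M) ≤ ε / 2 :=
    calc ∑' n, f (n + M) ≤ ∑' n, (1 / 2 : ℝ) ^ (n + M) :=
          Summable.tsum_le_tsum (fun n => hf_le_geom _) ((summable_nat_add_iff M).2 hf)
            ((summable_nat_add_iff M).2 summable_geometric_two)
      _ = 2 * (1 / 2) ^ M := by simp_rw [pow_add, tsum_mul_right, tsum_geometric_two]
      _ ≤ ε / 2 := by linarith
  calc dStar A μ ν = ∑ n ∈ Finset.range M, f n + ∑' n, f (n + M) :=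
        (hf.sum_add_tsum_nat_add M).symm
    _ ≤ ε := by linarith

end Krieger

theorem statement_9_general {Λ : Type*} [Fintype Λ] [TopologicalSpace Λ] [DiscreteTopology Λ]
    [MeasurableSpace Λ] [BorelSpace Λ]
    {X : Type*} [MetricSpace X] [MeasurableSpace X]
    (T : X ≃ₜ X) (ψ : X → ℤ → Λ) (ψk : ℕ → X → ℤ → Λ)
    (hψ : Measurable ψ) (hψk : ∀ k, Measurable (ψk k))
    (hequiv : ∀ x, ψ (T x) = shift (ψ x))
    (hequivk : ∀ k x, ψk k (T x) = shift (ψk k x))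
    (hconv : ∀ ε > (0:ℝ), ∃ K₀ : ℕ, ∀ k ≥ K₀, ∀ x : X, dB (ψk k x) (ψ x) ≤ ε) :
    ∀ A : ℕ → Set (ℤ → Λ), IsCylEnum A →
      ∀ ε > (0:ℝ), ∃ K₀ : ℕ, ∀ k ≥ K₀, ∀ μ : ↥(invProb ⇑T),
        dStar A (inducedMap ⇑T (ψk k) μ) (inducedMap ⇑T ψ μ) ≤ ε := by
  intro A hA ε hε
  obtain ⟨M, δ, hδ, hdStar⟩ := exists_dStar_le A hε
  choose N w hA_eq using hA.1
  set L := (Finset.range M).sup N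
  obtain ⟨K₀, hK₀⟩ := hconv (δ / (L + 1)) (by positivity)
  refine ⟨K₀, fun k hk μ => hdStar _ _ fun n hn => ?_⟩
  have hmeas : MeasurableSet (A n) := hA_eq n ▸ measurableSet_cylinder (N n) (w n)
  have hNL : (N n : ℝ) ≤ L := by exact_mod_cast Finset.le_sup (Finset.mem_range.2 hn)
  rw [coe_inducedMap_apply (hψk k) μ hmeas, coe_inducedMap_apply hψ μ hmeas, hA_eq n]
  calc _ ≤ N n * (μ : Measure X).real {x | ψk k x 0 ≠ ψ x 0} :=
        abs_measureReal_preimage_cylinder_sub_le μ.2 (hψk k) hψ (hequivk k) hequiv (N n) (w n)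
    _ ≤ L * (δ / (L + 1)) := by
        gcongr
        exact measureReal_disagree_le μ.2 (hψk k) hψ (hequivk k) hequiv (by positivity) (hK₀ k hk)
    _ ≤ δ := by
        rw [mul_div_assoc', div_le_iff₀ (by positivity)]
        nlinarith

/-- If the Borel equivariant maps `ψ_k` converge to the Borel equivariant
map `ψ` uniformly with respect to `d_∞`, then the induced maps `ψ_k*` converge uniformly to
`ψ*` on `M(X,T)` with respect to the metric `d_*`. -/
theorem statement_9 {Λ : Type*} [Fintype Λ] [TopologicalSpace Λ] [DiscreteTopology Λ]
    [MeasurableSpace Λ] [BorelSpace Λ]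
    {X : Type*} [MetricSpace X] [CompactSpace X] [MeasurableSpace X] [BorelSpace X]
    (T : X ≃ₜ X) (ψ : X → ℤ → Λ) (ψk : ℕ → X → ℤ → Λ)
    (hψ : Measurable ψ) (hψk : ∀ k, Measurable (ψk k))
    (hequiv : ∀ x, ψ (T x) = shift (ψ x))
    (hequivk : ∀ k x, ψk k (T x) = shift (ψk k x))
    (hconv : ∀ ε > (0:ℝ), ∃ K₀ : ℕ, ∀ k ≥ K₀, ∀ x : X, dB (ψk k x) (ψ x) ≤ ε) :
    ∀ A : ℕ → Set (ℤ → Λ), IsCylEnum A →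
      ∀ ε > (0:ℝ), ∃ K₀ : ℕ, ∀ k ≥ K₀, ∀ μ : ↥(invProb ⇑T),
        dStar A (inducedMap ⇑T (ψk k) μ) (inducedMap ⇑T ψ μ) ≤ ε :=
  statement_9_general T ψ ψk hψ hψk hequiv hequivk hconv
end
end

section
/- Let (X,T) be a topological dynamical system satisfying: (i) limsup_n (1/n) log #Per_n(X,T) < log K; (ii) #Per_n(X,T) ≤ #Per_n({1,…,K}^ℤ,σ) for every integer n ≥ 1. Then for every sufficiently large integer n₁ there exists an injective equivariant map ψ : ⋃_{n ≤ n₁} Per_n(X,T) → {1,…,K}^ℤ such that the map ψ^{n₁} sending x to the word (ψ(x)_0, ψ(x)_1, …, ψ(x)_{n₁−1}) ∈ {1,…,K}^{n₁} is also injective. -/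
open MeasureTheory Filter Topology Set
open scoped ENNReal NNReal Classical

noncomputable section

open Krieger

/-!
The coding is built one least period `m = 1, …, n₁` at a time. Per_m(X,T) is a finite union of
orbits of length `m`, so the assumption #Per_m(X,T) ≤ #Per_m(σ) yields an equivariant injection
into Per_m(σ), defined orbit by orbit, and a point of least period `m ≤ n₁` is determined by its
`n₁`-window. Codes of least periods `p < m` can share an `n₁`-window only if `m + p > n₁`:
otherwise the window would force the period `p` on the code of period `m`. Hence for `2m ≤ n₁`
any equivariant injection works, while for `2m > n₁` the codes of period `m` are taken among
sequences none of whose shifts has an already used window. At most `m · #{x : per x < m}` such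
sequences are lost, and the growth assumption makes this, together with #Per_m(X,T), small
against #Per_m(σ) ≥ K^m - K^(m/2+1) once `m > n₁/2` is large.
-/

open Function

theorem Function.Periodic.apply_emod {Λ : Type*} {z : ℤ → Λ} {n : ℤ} (hz : Periodic z n)
    (i : ℤ) :
    z (i % n) = z i := by
  rw [Int.emod_def, mul_comm]
  exact hz.sub_int_mul_eq _

namespace Krieger

section PeriodicPts

variable {α : Type*}

lemma leastPer_subset_ptsOfPeriod (f : α → α) (n : ℕ) :
    leastPer f n ⊆ ptsOfPeriod f n := fun x hx =>
  (hx : minimalPeriod f x = n) ▸ isPeriodicPt_minimalPeriod f x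

lemma ptsOfPeriod_diff_leastPer_subset (f : α → α) {n : ℕ} (hn : 0 < n) :
    ptsOfPeriod f n \ leastPer f n ⊆ ⋃ d ∈ Finset.Icc 1 (n / 2), ptsOfPeriod f d := by
  rintro x ⟨hx, hxn⟩
  obtain ⟨t, ht⟩ := (hx : IsPeriodicPt f n x).minimalPeriod_dvd
  have hpos := (hx : IsPeriodicPt f n x).minimalPeriod_pos hn
  have ht2 : 2 ≤ t := by
    rcases t with _ | _ | t
    · omega
    · exact absurd (by simpa using ht.symm : minimalPeriod f x = n) hxn
    · omega
  refine mem_biUnion (x := minimalPeriod f x) ?_ (isPeriodicPt_minimalPeriod f x)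
  simp only [Finset.coe_Icc, mem_Icc]
  refine ⟨hpos, (Nat.le_div_iff_mul_le two_pos).2 ?_⟩
  rw [ht]
  exact Nat.mul_le_mul_left _ ht2

lemma mapsTo_leastPer (f : α → α) {n : ℕ} (hn : 0 < n) :
    MapsTo f (leastPer f n) (leastPer f n) := fun x (hx : minimalPeriod f x = n) =>
  (minimalPeriod_apply (minimalPeriod_pos_iff_mem_periodicPts.1 (hx ▸ hn))).trans hx

lemma iterate_eq_iterate_iff {f : α → α} {a : α} (ha : 0 < minimalPeriod f a) {i j : ℕ} :
    f^[i] a = f^[j] a ↔ i % minimalPeriod f a = j % minimalPeriod f a := by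
  rw [← iterate_mod_minimalPeriod_eq, ← iterate_mod_minimalPeriod_eq (n := j),
    iterate_eq_iterate_iff_of_lt_minimalPeriod (Nat.mod_lt _ ha) (Nat.mod_lt _ ha)]

end PeriodicPts

section Shift

variable {Λ : Type*}

lemma shift_injective : Injective (shift : (ℤ → Λ) → ℤ → Λ) := fun z y h =>
  funext fun i => by simpa [shift] using congrFun h (i - 1)

lemma shift_iterate_apply (z : ℤ → Λ) (k : ℕ) (i : ℤ) : shift^[k] z i = z (i + k) := by
  induction k generalizing z with
  | zero => simp
  | succ k ih => rw [iterate_succ_apply, ih, shift]; push_cast; ring_nf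

lemma isPeriodicPt_shift_iff {z : ℤ → Λ} {n : ℕ} : IsPeriodicPt shift n z ↔ Periodic z n := by
  simp only [IsPeriodicPt, IsFixedPt, funext_iff, shift_iterate_apply, Periodic]

lemma periodic_of_mem_leastPer {z : ℤ → Λ} {n : ℕ} (hz : z ∈ leastPer shift n) : Periodic z n :=
  isPeriodicPt_shift_iff.1 (hz ▸ isPeriodicPt_minimalPeriod shift z)

def ptsOfPeriodShiftEquiv (Λ : Type*) (n : ℕ) [NeZero n] :
    ptsOfPeriod (shift : (ℤ → Λ) → _) n ≃ (ZMod n → Λ) where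
  toFun z r := z.1 r.val
  invFun w := ⟨fun i => w i, isPeriodicPt_shift_iff.2 fun i => by simp⟩
  left_inv z := by
    ext i
    simp only [ZMod.val_intCast]
    exact (isPeriodicPt_shift_iff.1 z.2).apply_emod i
  right_inv w := by
    ext r
    simp

lemma ncard_ptsOfPeriod_shift {K n : ℕ} (hn : 0 < n) :
    (ptsOfPeriod (shift : (ℤ → Fin K) → _) n).ncard = K ^ n := by
  have : NeZero n := ⟨hn.ne'⟩
  simp [← Nat.card_coe_set_eq, Nat.card_congr (ptsOfPeriodShiftEquiv (Fin K) n)]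

lemma finite_ptsOfPeriod_shift [Finite Λ] {n : ℕ} (hn : 0 < n) :
    (ptsOfPeriod (shift : (ℤ → Λ) → _) n).Finite :=
  have : NeZero n := ⟨hn.ne'⟩
  .of_equiv _ (ptsOfPeriodShiftEquiv Λ n).symm

lemma finite_leastPer_shift [Finite Λ] {m : ℕ} (hm : 0 < m) :
    (leastPer (shift : (ℤ → Λ) → _) m).Finite :=
  (finite_ptsOfPeriod_shift hm).subset (leastPer_subset_ptsOfPeriod _ _)

lemma ncard_leastPer_shift_le {K m : ℕ} (hm : 0 < m) :
    (leastPer (shift : (ℤ → Fin K) → _) m).ncard ≤ K ^ m :=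
  ncard_ptsOfPeriod_shift (K := K) hm ▸
    Set.ncard_le_ncard (leastPer_subset_ptsOfPeriod _ _) (finite_ptsOfPeriod_shift hm)

lemma pow_le_ncard_leastPer_shift_add {K n : ℕ} (hK : 2 ≤ K) (hn : 0 < n) :
    K ^ n ≤ (leastPer (shift : (ℤ → Fin K) → _) n).ncard + K ^ (n / 2 + 1) := by
  have hsmall : (ptsOfPeriod (shift : (ℤ → Fin K) → _) n \ leastPer shift n).ncard
      ≤ K ^ (n / 2 + 1) := calc
    _ ≤ (⋃ d ∈ Finset.Icc 1 (n / 2), ptsOfPeriod (shift : (ℤ → Fin K) → _) d).ncard :=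
      Set.ncard_le_ncard (ptsOfPeriod_diff_leastPer_subset shift hn)
        ((Finset.finite_toSet _).biUnion fun d hd =>
          finite_ptsOfPeriod_shift (Finset.mem_Icc.1 hd).1)
    _ ≤ ∑ d ∈ Finset.Icc 1 (n / 2), (ptsOfPeriod (shift : (ℤ → Fin K) → _) d).ncard :=
      Finset.set_ncard_biUnion_le _ _
    _ = ∑ d ∈ Finset.Icc 1 (n / 2), K ^ d :=
      Finset.sum_congr rfl fun d hd => ncard_ptsOfPeriod_shift (Finset.mem_Icc.1 hd).1
    _ ≤ K ^ (n / 2 + 1) :=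
      (Nat.geomSum_lt hK fun d hd => Nat.lt_succ_of_le (Finset.mem_Icc.1 hd).2).le
  calc K ^ n = (ptsOfPeriod (shift : (ℤ → Fin K) → _) n).ncard := (ncard_ptsOfPeriod_shift hn).symm
    _ ≤ _ := Set.ncard_le_ncard_sdiff_add_ncard _ _
      ((finite_ptsOfPeriod_shift hn).subset (leastPer_subset_ptsOfPeriod _ _))
    _ ≤ _ := by omega

end Shift

section Window

variable {Λ : Type*} {n m p : ℕ} {z y : ℤ → Λ}

def window (n : ℕ) (z : ℤ → Λ) : Fin n → Λ := fun i => z (i : ℕ)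

lemma apply_eq_of_window_eq (h : window n z = window n y) {i : ℤ} (h0 : 0 ≤ i) (hi : i < n) :
    z i = y i := by
  lift i to ℕ using h0
  exact congrFun h ⟨i, by exact_mod_cast hi⟩

lemma eq_of_window_eq (hz : Periodic z m) (hy : Periodic y m) (hm : 0 < m) (hmn : m ≤ n)
    (h : window n z = window n y) : z = y := by
  funext i
  have := Int.emod_nonneg i (Int.natCast_ne_zero.2 hm.ne')
  have := Int.emod_lt_of_pos i (Int.natCast_pos.2 hm)
  rw [← hz.apply_emod, ← hy.apply_emod]
  exact apply_eq_of_window_eq h (by omega) (by omega)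

lemma periodic_of_window_eq (hz : Periodic z m) (hy : Periodic y p) (hm : 0 < m)
    (hmn : m + p ≤ n) (h : window n z = window n y) : Periodic z p := by
  intro i
  have := Int.emod_nonneg i (Int.natCast_ne_zero.2 hm.ne')
  have := Int.emod_lt_of_pos i (Int.natCast_pos.2 hm)
  calc z (i + p) = z (i % m + p) := by
        rw [← hz.apply_emod (i + p), ← hz.apply_emod (i % m + p), Int.emod_add_emod]
    _ = y (i % m + p) := apply_eq_of_window_eq h (by omega) (by omega)
    _ = y (i % m) := hy _
    _ = z (i % m) := (apply_eq_of_window_eq h (by omega) (by omega)).symm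
    _ = z i := hz.apply_emod i

lemma window_ne_of_lt (hz : z ∈ leastPer shift m) (hy : y ∈ leastPer shift p) (hp : 0 < p)
    (hpm : p < m) (hmn : m + p ≤ n) : window n z ≠ window n y := fun h => by
  have := (isPeriodicPt_shift_iff.2 <| periodic_of_window_eq (periodic_of_mem_leastPer hz)
    (periodic_of_mem_leastPer hy) (by omega) hmn h).minimalPeriod_le hp
  rw [show minimalPeriod shift z = m from hz] at this
  omega

lemma injOn_window_leastPer (hm : 0 < m) (hmn : m ≤ n) :
    InjOn (window n) (leastPer (shift : (ℤ → Λ) → _) m) := fun _ hz _ hy =>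
  eq_of_window_eq (periodic_of_mem_leastPer hz) (periodic_of_mem_leastPer hy) hm hmn

end Window

section Orbit

variable {α β : Type*} {f : α → α} {g : β → β} {a x : α}

def orbitFinset (f : α → α) (a : α) : Finset α :=
  (Finset.range (minimalPeriod f a)).image (f^[·] a)

lemma mem_orbitFinset : x ∈ orbitFinset f a ↔ ∃ k < minimalPeriod f a, f^[k] a = x := by
  simp [orbitFinset]

lemma iterate_mem_orbitFinset (ha : 0 < minimalPeriod f a) (k : ℕ) :
    f^[k] a ∈ orbitFinset f a :=
  mem_orbitFinset.2 ⟨k % minimalPeriod f a, Nat.mod_lt _ ha, iterate_mod_minimalPeriod_eq⟩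

lemma apply_mem_orbitFinset (ha : 0 < minimalPeriod f a) (hx : x ∈ orbitFinset f a) :
    f x ∈ orbitFinset f a := by
  obtain ⟨k, -, rfl⟩ := mem_orbitFinset.1 hx
  simpa only [iterate_succ_apply'] using iterate_mem_orbitFinset ha (k + 1)

lemma mem_orbitFinset_of_apply_mem (ha : 0 < minimalPeriod f a) (hx : 0 < minimalPeriod f x)
    (h : f x ∈ orbitFinset f a) : x ∈ orbitFinset f a := by
  obtain ⟨k, -, hk⟩ := mem_orbitFinset.1 h
  have hx' : f^[minimalPeriod f x - 1] (f x) = x := by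
    rw [← iterate_succ_apply, Nat.succ_eq_add_one, Nat.sub_add_cancel hx, iterate_minimalPeriod]
  rw [← hx', ← hk, ← iterate_add_apply]
  exact iterate_mem_orbitFinset ha _

lemma card_orbitFinset (f : α → α) (a : α) : (orbitFinset f a).card = minimalPeriod f a := by
  rw [orbitFinset, Finset.card_image_of_injOn, Finset.card_range]
  simpa [Set.InjOn] using iterate_injOn_Iio_minimalPeriod (f := f) (x := a)

lemma orbitFinset_subset {A : Finset α} (hA : MapsTo f A A) (ha : a ∈ A) :
    orbitFinset f a ⊆ A := fun x hx => by
  obtain ⟨k, -, rfl⟩ := mem_orbitFinset.1 hx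
  exact hA.iterate k ha

structure EquivariantInjOn (f : α → α) (g : β → β) (φ : α → β) (A : Set α) (B : Set β) : Prop where
  mapsTo : MapsTo φ A B
  injOn : InjOn φ A
  map_apply : ∀ x ∈ A, φ (f x) = g (φ x)

lemma EquivariantInjOn.piecewise {φ₁ φ₂ : α → β} {A₁ A₂ : Set α} {B₁ B₂ : Set β}
    [DecidablePred (· ∈ A₁)] (h₁ : EquivariantInjOn f g φ₁ A₁ B₁)
    (h₂ : EquivariantInjOn f g φ₂ A₂ B₂) (hA₁ : MapsTo f A₁ A₁) (hA₂ : MapsTo f A₂ A₂)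
    (hA : Disjoint A₁ A₂) (hB : Disjoint B₁ B₂) :
    EquivariantInjOn f g (A₁.piecewise φ₁ φ₂) (A₁ ∪ A₂) (B₁ ∪ B₂) := by
  have h₂' : ∀ x ∈ A₂, x ∉ A₁ := fun x hx h => hA.notMem_of_mem_left h hx
  refine ⟨?_, ?_, ?_⟩
  · rintro x (hx | hx)
    · simpa [piecewise_eq_of_mem _ _ _ hx] using Or.inl (h₁.mapsTo hx)
    · simpa [piecewise_eq_of_notMem _ _ _ (h₂' x hx)] using Or.inr (h₂.mapsTo hx)
  · refine (injOn_union hA).2 ⟨h₁.injOn.congr (piecewise_eqOn A₁ φ₁ φ₂).symm,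
      h₂.injOn.congr fun x hx => (piecewise_eqOn_compl A₁ φ₁ φ₂ (h₂' x hx)).symm, ?_⟩
    intro x hx y hy hxy
    rw [piecewise_eq_of_mem _ _ _ hx, piecewise_eq_of_notMem _ _ _ (h₂' y hy)] at hxy
    exact hB.ne_of_mem (h₁.mapsTo hx) (h₂.mapsTo hy) hxy
  · rintro x (hx | hx)
    · rw [piecewise_eq_of_mem _ _ _ hx, piecewise_eq_of_mem _ _ _ (hA₁ hx), h₁.map_apply x hx]
    · rw [piecewise_eq_of_notMem _ _ _ (h₂' x hx), piecewise_eq_of_notMem _ _ _ (h₂' _ (hA₂ hx)),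
        h₂.map_apply x hx]

lemma mapsTo_sdiff_orbitFinset {A : Finset α} (hA : ∀ x ∈ A, 0 < minimalPeriod f x)
    (hfA : MapsTo f A A) (ha : a ∈ A) :
    MapsTo f ↑(A \ orbitFinset f a) ↑(A \ orbitFinset f a) := by
  intro x hx
  simp only [Finset.coe_sdiff, Set.mem_sdiff, Finset.mem_coe] at hx ⊢
  exact ⟨hfA hx.1, fun h => hx.2 (mem_orbitFinset_of_apply_mem (hA a ha) (hA x hx.1) h)⟩

lemma exists_equivariantInjOn_orbitFinset {b : β} (ha : 0 < minimalPeriod f a)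
    (hab : minimalPeriod g b = minimalPeriod f a) :
    ∃ φ : α → β, EquivariantInjOn f g φ (orbitFinset f a) (orbitFinset g b) := by
  classical
  have hb : 0 < minimalPeriod g b := hab ▸ ha
  have key : ∀ i j, f^[i] a = f^[j] a ↔ g^[i] b = g^[j] b := fun i j => by
    rw [iterate_eq_iterate_iff ha, iterate_eq_iterate_iff hb, hab]
  let φ : α → β := fun x => if h : ∃ k, f^[k] a = x then g^[h.choose] b else b
  have hφ : ∀ k, φ (f^[k] a) = g^[k] b := fun k => by
    have h : ∃ j, f^[j] a = f^[k] a := ⟨k, rfl⟩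
    simp only [φ, dif_pos h]
    exact (key _ _).1 h.choose_spec
  refine ⟨φ, ?_, ?_, ?_⟩
  · rintro _ hx
    obtain ⟨k, -, rfl⟩ := mem_orbitFinset.1 hx
    rw [hφ]
    exact iterate_mem_orbitFinset hb k
  · rintro _ hx _ hy hxy
    obtain ⟨i, -, rfl⟩ := mem_orbitFinset.1 hx
    obtain ⟨j, -, rfl⟩ := mem_orbitFinset.1 hy
    rw [hφ, hφ] at hxy
    exact (key i j).2 hxy
  · rintro _ hx
    obtain ⟨k, -, rfl⟩ := mem_orbitFinset.1 hx
    rw [← iterate_succ_apply' f, hφ, hφ, iterate_succ_apply']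

theorem exists_equivariantInjOn [Nonempty β] {n : ℕ} (hn : 0 < n) {A : Finset α} {B : Finset β}
    (hA : ∀ x ∈ A, minimalPeriod f x = n) (hB : ∀ y ∈ B, minimalPeriod g y = n)
    (hfA : MapsTo f A A) (hgB : MapsTo g B B) (hcard : A.card ≤ B.card) :
    ∃ φ : α → β, EquivariantInjOn f g φ A B := by
  classical
  induction A using Finset.strongInduction generalizing B with
  | H A ih =>
  rcases A.eq_empty_or_nonempty with rfl | ⟨a, ha⟩
  · exact ⟨fun _ => Classical.arbitrary β, by simp [MapsTo], by simp, by simp⟩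
  obtain ⟨b, hb⟩ : B.Nonempty := Finset.card_pos.1 ((Finset.card_pos.2 ⟨a, ha⟩).trans_le hcard)
  have ha' : 0 < minimalPeriod f a := (hA a ha).symm ▸ hn
  have hb' : 0 < minimalPeriod g b := (hB b hb).symm ▸ hn
  have hOa := orbitFinset_subset hfA ha
  have hOb := orbitFinset_subset hgB hb
  obtain ⟨φ₁, h₁⟩ := exists_equivariantInjOn_orbitFinset ha' ((hB b hb).trans (hA a ha).symm)
  obtain ⟨φ₂, h₂⟩ := ih (A \ orbitFinset f a)
    (Finset.sdiff_ssubset hOa ⟨a, iterate_mem_orbitFinset ha' 0⟩)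
    (B := B \ orbitFinset g b) (fun x hx => hA x (Finset.mem_sdiff.1 hx).1)
    (fun y hy => hB y (Finset.mem_sdiff.1 hy).1)
    (mapsTo_sdiff_orbitFinset (fun x hx => (hA x hx).symm ▸ hn) hfA ha)
    (mapsTo_sdiff_orbitFinset (fun y hy => (hB y hy).symm ▸ hn) hgB hb)
    (by
      rw [Finset.card_sdiff_of_subset hOa, Finset.card_sdiff_of_subset hOb, card_orbitFinset,
        card_orbitFinset, hA a ha, hB b hb]
      omega)
  have h := h₁.piecewise h₂ (fun x hx => apply_mem_orbitFinset ha' hx)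
    (mapsTo_sdiff_orbitFinset (fun x hx => (hA x hx).symm ▸ hn) hfA ha)
    (Finset.disjoint_coe.2 Finset.disjoint_sdiff) (Finset.disjoint_coe.2 Finset.disjoint_sdiff)
  rw [← Finset.coe_union, Finset.union_sdiff_of_subset hOa, ← Finset.coe_union,
    Finset.union_sdiff_of_subset hOb] at h
  exact ⟨_, h⟩

end Orbit

section Growth

lemma exists_growth_rate_lt {a : ℕ → ℕ} {K : ℕ} (hle : ∀ n, 0 < n → a n ≤ K ^ n)
    (hlim : limsup (fun n : ℕ => Real.log (a n) / n) atTop < Real.log K) :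
    2 ≤ K ∧ ∃ E : ℝ, 1 < E ∧ E < K ∧ ∀ᶠ n in atTop, (a n : ℝ) ≤ E ^ n := by
  set u : ℕ → ℝ := fun n => Real.log (a n) / n
  have hu0 : ∀ n, 0 ≤ u n := fun n => div_nonneg (Real.log_natCast_nonneg _) n.cast_nonneg
  have hbdd : IsBoundedUnder (· ≤ ·) atTop u := by
    refine isBoundedUnder_of_eventually_le (a := Real.log K)
      (eventually_atTop.2 ⟨1, fun n hn => ?_⟩)
    have hn' : (0 : ℝ) < n := by exact_mod_cast hn
    rw [div_le_iff₀ hn', mul_comm, ← Real.log_pow]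
    rcases (a n).eq_zero_or_pos with h | h
    · rw [h, Nat.cast_zero, Real.log_zero, Real.log_pow]
      exact mul_nonneg hn'.le (Real.log_natCast_nonneg K)
    · exact Real.log_le_log (by exact_mod_cast h) (by exact_mod_cast hle n hn)
  have h0 : 0 ≤ limsup u atTop := le_limsup_of_frequently_le (.of_forall hu0) hbdd
  have hK : 2 ≤ K := by
    by_contra! hK
    interval_cases K <;> simp at hlim <;> linarith
  obtain ⟨c, hc, hcK⟩ := exists_between hlim
  refine ⟨hK, Real.exp c, Real.one_lt_exp_iff.2 (h0.trans_lt hc), ?_, ?_⟩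
  · rwa [← Real.exp_log (show (0 : ℝ) < K by positivity), Real.exp_lt_exp]
  · filter_upwards [eventually_lt_of_limsup_lt hc hbdd,
      eventually_ge_atTop 1] with n hn hn1
    rcases (a n).eq_zero_or_pos with h | h
    · simp [h, (Real.exp_pos c).le]
    · have hn' : (0 : ℝ) < n := by exact_mod_cast hn1
      rw [← Real.exp_nat_mul]
      refine ((Real.log_lt_iff_lt_exp (by exact_mod_cast h)).1 ?_).le
      rw [mul_comm]
      exact (div_lt_iff₀ hn').1 hn

lemma exists_le_mul_pow {a : ℕ → ℕ} {E : ℝ} (hE : 1 ≤ E) (ha : ∀ᶠ n in atTop, (a n : ℝ) ≤ E ^ n) :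
    ∃ C : ℝ, 0 ≤ C ∧ ∀ n, (a n : ℝ) ≤ C * E ^ n := by
  obtain ⟨N, hN⟩ := eventually_atTop.1 ha
  have hS : 0 ≤ ∑ j ∈ Finset.range N, (a j : ℝ) := by positivity
  refine ⟨∑ j ∈ Finset.range N, (a j : ℝ) + 1, by positivity, fun n => ?_⟩
  have hEn : 1 ≤ E ^ n := one_le_pow₀ hE
  rcases lt_or_ge n N with h | h
  · have : (a n : ℝ) ≤ ∑ j ∈ Finset.range N, (a j : ℝ) :=
      Finset.single_le_sum (fun j _ => Nat.cast_nonneg (a j)) (Finset.mem_range.2 h)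
    nlinarith
  · nlinarith [hN n h]

lemma eventually_add_mul_sum_add_pow_le {a : ℕ → ℕ} {K : ℕ} {E : ℝ} (hK : 2 ≤ K) (hE : 1 ≤ E)
    (hEK : E < K) (ha : ∀ᶠ n in atTop, (a n : ℝ) ≤ E ^ n) :
    ∀ᶠ m in atTop, a m + m * ∑ j ∈ Finset.range m, a j + K ^ (m / 2 + 1) ≤ K ^ m := by
  obtain ⟨C, hC, haC⟩ := exists_le_mul_pow hE ha
  have hK1 : (1 : ℝ) < K := by exact_mod_cast hK
  -- each of the three terms is at most a constant times `m ^ 2 * r ^ m`, and `r < K`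
  set r := max E √K
  have hr1 : 1 ≤ r := hE.trans (le_max_left _ _)
  have hrK : ‖r‖ < K := by
    rw [Real.norm_of_nonneg (by linarith)]
    exact max_lt hEK (Real.sqrt_lt_self_iff.2 hK1)
  have hlo := (isLittleO_pow_const_mul_const_pow_const_pow_of_norm_lt 2 hrK).const_mul_left
    (2 * C + K)
  filter_upwards [hlo.def one_pos, eventually_ge_atTop 1] with m hm hm1
  have hrm : 1 ≤ r ^ m := one_le_pow₀ hr1
  have hEr : E ^ m ≤ r ^ m := pow_le_pow_left₀ (by linarith) (le_max_left _ _) m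
  have hm2 : (1 : ℝ) ≤ (m : ℝ) ^ 2 := one_le_pow₀ (by exact_mod_cast hm1)
  have h1 : (a m : ℝ) ≤ C * ((m : ℝ) ^ 2 * r ^ m) := by
    nlinarith [haC m, mul_le_mul_of_nonneg_left hEr hC]
  have h2 : (m : ℝ) * ∑ j ∈ Finset.range m, (a j : ℝ) ≤ C * ((m : ℝ) ^ 2 * r ^ m) := by
    have hsum : ∑ j ∈ Finset.range m, (a j : ℝ) ≤ m * (C * E ^ m) := by
      simpa using Finset.sum_le_card_nsmul _ _ _ fun j hj => (haC j).trans
        (mul_le_mul_of_nonneg_left (pow_le_pow_right₀ hE (Finset.mem_range.1 hj).le) hC)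
    nlinarith [mul_le_mul_of_nonneg_left hsum (Nat.cast_nonneg m),
      mul_le_mul_of_nonneg_left hEr hC]
  have h3 : (K : ℝ) ^ (m / 2 + 1) ≤ K * ((m : ℝ) ^ 2 * r ^ m) := by
    have : (K : ℝ) ^ (m / 2) ≤ r ^ m := calc
      (K : ℝ) ^ (m / 2) = √K ^ (2 * (m / 2)) := by rw [pow_mul, Real.sq_sqrt (by positivity)]
      _ ≤ √K ^ m := pow_le_pow_right₀ (Real.one_le_sqrt.2 hK1.le) (by omega)
      _ ≤ r ^ m := pow_le_pow_left₀ (Real.sqrt_nonneg _) (le_max_right _ _) m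
    rw [pow_succ, mul_comm]
    exact mul_le_mul_of_nonneg_left (this.trans (le_mul_of_one_le_left (by positivity) hm2))
      (by positivity)
  rw [Real.norm_of_nonneg (by positivity), Real.norm_of_nonneg (by positivity)] at hm
  have : ((a m + m * ∑ j ∈ Finset.range m, a j + K ^ (m / 2 + 1) : ℕ) : ℝ) ≤ (K ^ m : ℕ) := by
    push_cast
    linarith
  exact_mod_cast this

end Growth

section Coding

variable {α Λ : Type*} (T : α → α) {n₁ n m : ℕ}

def periodicUpTo (n : ℕ) : Set α := {x | 1 ≤ minimalPeriod T x ∧ minimalPeriod T x ≤ n}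

lemma mapsTo_periodicUpTo : MapsTo T (periodicUpTo T n) (periodicUpTo T n) := fun x hx => by
  have : minimalPeriod T (T x) = minimalPeriod T x := mapsTo_leastPer T hx.1 rfl
  simpa only [periodicUpTo, mem_ofPred_eq, this] using hx

lemma periodicUpTo_zero : periodicUpTo T 0 = ∅ :=
  eq_empty_of_forall_notMem fun _ hx => absurd (hx.1.trans hx.2) (by omega)

lemma periodicUpTo_eq_biUnion : periodicUpTo T n = ⋃ j ∈ Finset.Icc 1 n, leastPer T j := by
  ext x
  simp [periodicUpTo, leastPer]

lemma finite_periodicUpTo (hfin : ∀ n, 0 < n → (leastPer T n).Finite) (n : ℕ) :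
    (periodicUpTo T n).Finite := by
  rw [periodicUpTo_eq_biUnion]
  exact (Finset.finite_toSet _).biUnion fun j hj => hfin j (Finset.mem_Icc.1 hj).1

lemma ncard_periodicUpTo_le (n : ℕ) :
    (periodicUpTo T n).ncard ≤ ∑ j ∈ Finset.range (n + 1), (leastPer T j).ncard := by
  rw [periodicUpTo_eq_biUnion]
  refine (Finset.set_ncard_biUnion_le _ _).trans (Finset.sum_le_sum_of_subset fun j hj => ?_)
  simp only [Finset.mem_Icc, Finset.mem_range] at hj ⊢
  omega

lemma periodicUpTo_succ : periodicUpTo T (n + 1) = leastPer T (n + 1) ∪ periodicUpTo T n := by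
  ext x
  simp only [periodicUpTo, leastPer, mem_union, mem_ofPred_eq]
  omega

structure IsPeriodicCoding (n₁ n : ℕ) (ψ : α → ℤ → Λ) : Prop where
  minimalPeriod_eq : ∀ x ∈ periodicUpTo T n, minimalPeriod shift (ψ x) = minimalPeriod T x
  map_apply : ∀ x ∈ periodicUpTo T n, ψ (T x) = shift (ψ x)
  injOn_window : InjOn (window n₁ ∘ ψ) (periodicUpTo T n)

/-- The windows of all shifts of `z` are constrained, not just that of `z`, so that the set is
shift-invariant. -/
def avoiding (n₁ m : ℕ) (W : Set (Fin n₁ → Λ)) : Set (ℤ → Λ) :=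
  {z | z ∈ leastPer shift m ∧ ∀ k, window n₁ (shift^[k] z) ∉ W}

variable {T} {W : Set (Fin n₁ → Λ)}

lemma avoiding_subset : avoiding n₁ m W ⊆ leastPer shift m := fun _ hz => hz.1

lemma mapsTo_avoiding (hm : 0 < m) : MapsTo shift (avoiding n₁ m W) (avoiding n₁ m W) :=
  fun _ hz => ⟨mapsTo_leastPer shift hm hz.1, fun k => by
    simpa only [← iterate_succ_apply] using hz.2 (k + 1)⟩

lemma avoiding_eq_leastPer (h2m : 2 * m ≤ n₁)
    (hW : W ⊆ window n₁ '' {y | 0 < minimalPeriod shift y ∧ minimalPeriod shift y < m}) :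
    avoiding n₁ m W = leastPer shift m := by
  refine avoiding_subset.antisymm fun z hz => ⟨hz, fun k hk => ?_⟩
  obtain ⟨y, ⟨hy0, hym⟩, hyz⟩ := hW hk
  have hzk : shift^[k] z ∈ leastPer shift m :=
    (mapsTo_leastPer shift (hy0.trans hym)).iterate k hz
  exact window_ne_of_lt hzk rfl hy0 hym (by omega) hyz.symm

lemma ncard_leastPer_sdiff_avoiding_le [Finite Λ] (hm : 0 < m) (hmn : m ≤ n₁) (hW : W.Finite) :
    (leastPer shift m \ avoiding n₁ m W).ncard ≤ m * W.ncard := by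
  have hsub : leastPer shift m \ avoiding n₁ m W ⊆
      ⋃ k ∈ Finset.range m, {z | z ∈ leastPer shift m ∧ window n₁ (shift^[k] z) ∈ W} := by
    rintro z ⟨hz, hzW⟩
    obtain ⟨k, hk⟩ : ∃ k, window n₁ (shift^[k] z) ∈ W := by
      by_contra! h
      exact hzW ⟨hz, h⟩
    refine mem_biUnion (x := k % m) (Finset.mem_range.2 (Nat.mod_lt _ hm)) ⟨hz, ?_⟩
    rwa [← show minimalPeriod shift z = m from hz, iterate_mod_minimalPeriod_eq]
  have hinj : ∀ k, InjOn (fun z => window n₁ (shift^[k] z))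
      {z | z ∈ leastPer shift m ∧ window n₁ (shift^[k] z) ∈ W} := fun k z hz y hy h =>
    shift_injective.iterate k <| injOn_window_leastPer hm hmn
      ((mapsTo_leastPer shift hm).iterate k hz.1) ((mapsTo_leastPer shift hm).iterate k hy.1) h
  calc _ ≤ _ := Set.ncard_le_ncard hsub <| (Finset.finite_toSet _).biUnion fun k _ =>
        (finite_leastPer_shift hm).subset fun z hz => hz.1
    _ ≤ ∑ k ∈ Finset.range m, {z | z ∈ leastPer shift m ∧ window n₁ (shift^[k] z) ∈ W}.ncard :=
      Finset.set_ncard_biUnion_le _ _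
    _ ≤ ∑ k ∈ Finset.range m, W.ncard := Finset.sum_le_sum fun k _ =>
      Set.ncard_le_ncard_of_injOn _ (fun z hz => hz.2) (hinj k) hW
    _ = m * W.ncard := by simp

lemma ncard_le_ncard_avoiding {K : ℕ} {W : Set (Fin n₁ → Fin K)} (hK : 2 ≤ K) (hm : 0 < m)
    (hmn : m ≤ n₁) (hW : W.Finite) {a : ℕ} (h : a + m * W.ncard + K ^ (m / 2 + 1) ≤ K ^ m) :
    a ≤ (avoiding n₁ m W).ncard := by
  have h₁ := pow_le_ncard_leastPer_shift_add hK hm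
  have h₂ := Set.ncard_le_ncard_sdiff_add_ncard (leastPer shift m) (avoiding n₁ m W)
    ((finite_leastPer_shift hm).subset avoiding_subset)
  have h₃ := ncard_leastPer_sdiff_avoiding_le hm hmn hW
  omega

lemma IsPeriodicCoding.exists_succ [Finite Λ] [Nonempty Λ] {ψ : α → ℤ → Λ}
    (hψ : IsPeriodicCoding T n₁ n ψ) (hn : n + 1 ≤ n₁) (hfin : (leastPer T (n + 1)).Finite)
    (hcard : (leastPer T (n + 1)).ncard ≤
      (avoiding n₁ (n + 1) ((window n₁ ∘ ψ) '' periodicUpTo T n)).ncard) :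
    ∃ ψ' : α → ℤ → Λ, IsPeriodicCoding T n₁ (n + 1) ψ' := by
  classical
  set W := (window n₁ ∘ ψ) '' periodicUpTo T n
  have hG : (avoiding n₁ (n + 1) W).Finite :=
    (finite_leastPer_shift n.succ_pos).subset avoiding_subset
  obtain ⟨φ, hφ⟩ := exists_equivariantInjOn (f := T) (g := shift) n.succ_pos
    (A := hfin.toFinset) (B := hG.toFinset) (fun x hx => hfin.mem_toFinset.1 hx)
    (fun z hz => avoiding_subset (hG.mem_toFinset.1 hz))
    (by simpa using mapsTo_leastPer T n.succ_pos) (by simpa using mapsTo_avoiding n.succ_pos)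
    (by rwa [← Set.ncard_eq_toFinset_card _ hfin, ← Set.ncard_eq_toFinset_card _ hG])
  simp only [Set.Finite.coe_toFinset] at hφ
  have hnotMem : ∀ x ∈ periodicUpTo T n, x ∉ leastPer T (n + 1) := fun x hx h => by
    have : minimalPeriod T x = n + 1 := h
    exact absurd hx.2 (by omega)
  have hψ' : ∀ x ∈ periodicUpTo T n, (leastPer T (n + 1)).piecewise φ ψ x = ψ x :=
    fun x hx => piecewise_eq_of_notMem _ _ _ (hnotMem x hx)
  refine ⟨(leastPer T (n + 1)).piecewise φ ψ, ⟨?_, ?_, ?_⟩⟩ <;> rw [periodicUpTo_succ]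
  · rintro x (hx | hx)
    · rw [piecewise_eq_of_mem _ _ _ hx]
      exact (avoiding_subset (hφ.mapsTo hx)).trans hx.symm
    · rw [hψ' x hx]
      exact hψ.minimalPeriod_eq x hx
  · rintro x (hx | hx)
    · rw [piecewise_eq_of_mem _ _ _ hx,
        piecewise_eq_of_mem _ _ _ (mapsTo_leastPer T n.succ_pos hx)]
      exact hφ.map_apply x hx
    · rw [hψ' x hx, hψ' _ (mapsTo_periodicUpTo T hx)]
      exact hψ.map_apply x hx
  · refine (injOn_union (disjoint_right.2 hnotMem)).2 ⟨?_, ?_, ?_⟩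
    · refine ((injOn_window_leastPer n.succ_pos hn).comp hφ.injOn
        (hφ.mapsTo.mono_right avoiding_subset)).congr fun x hx => ?_
      simp only [comp_apply, piecewise_eq_of_mem _ _ _ hx]
    · exact hψ.injOn_window.congr fun x hx => by simp only [comp_apply, hψ' x hx]
    · intro x hx y hy h
      simp only [comp_apply, piecewise_eq_of_mem _ _ _ hx, hψ' y hy] at h
      exact (hφ.mapsTo hx).2 0 (h ▸ mem_image_of_mem _ hy)

theorem exists_isPeriodicCoding {K M n₁ : ℕ} (hK : 2 ≤ K)
    (hfin : ∀ n, 0 < n → (leastPer T n).Finite)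
    (hle : ∀ n, 0 < n → (leastPer T n).ncard ≤ (leastPer (shift : (ℤ → Fin K) → _) n).ncard)
    (hM : ∀ m ≥ M, (leastPer T m).ncard + m * ∑ j ∈ Finset.range m, (leastPer T j).ncard
      + K ^ (m / 2 + 1) ≤ K ^ m) (hn₁ : 2 * M ≤ n₁) :
    ∃ ψ : α → ℤ → Fin K, IsPeriodicCoding T n₁ n₁ ψ := by
  have : Nonempty (Fin K) := ⟨⟨0, by omega⟩⟩
  suffices ∀ n ≤ n₁, ∃ ψ : α → ℤ → Fin K, IsPeriodicCoding T n₁ n ψ from this n₁ le_rfl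
  intro n hn
  induction n with
  | zero => exact ⟨fun _ => Classical.arbitrary _, by simp [periodicUpTo_zero],
      by simp [periodicUpTo_zero], by simp [periodicUpTo_zero]⟩
  | succ n ih =>
    obtain ⟨ψ, hψ⟩ := ih (by omega)
    have hP := finite_periodicUpTo T hfin n
    refine hψ.exists_succ hn (hfin _ n.succ_pos) ?_
    rcases le_or_gt (2 * (n + 1)) n₁ with hsmall | hlarge
    · rw [avoiding_eq_leastPer hsmall]
      · exact hle _ n.succ_pos
      · rintro _ ⟨x, hx, rfl⟩
        refine ⟨ψ x, ?_, rfl⟩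
        rw [mem_ofPred_eq, hψ.minimalPeriod_eq x hx]
        exact ⟨hx.1, Nat.lt_succ_of_le hx.2⟩
    · refine ncard_le_ncard_avoiding hK n.succ_pos hn (hP.image _)
        (le_trans ?_ (hM (n + 1) (by omega)))
      have hW := (Set.ncard_image_le (f := window n₁ ∘ ψ) hP).trans (ncard_periodicUpTo_le T n)
      exact Nat.add_le_add_right (Nat.add_le_add_left (Nat.mul_le_mul_left _ hW) _) _

end Coding

end Krieger

theorem statement_12_general {X : Type*} [MetricSpace X]
    (K : ℕ) (T : X ≃ₜ X)
    (hgrowth : Filter.limsup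
      (fun n : ℕ => Real.log (Nat.card ↥(leastPer ⇑T n)) / n) Filter.atTop < Real.log K)
    (hcard : ∀ n : ℕ, 1 ≤ n →
      Nonempty (↥(leastPer ⇑T n) ↪ ↥(leastPer (shift : (ℤ → Fin K) → ℤ → Fin K) n))) :
    ∃ N₀ : ℕ, ∀ n₁ ≥ N₀, ∃ ψ : X → ℤ → Fin K,
      Set.InjOn ψ {x | 1 ≤ Function.minimalPeriod ⇑T x ∧ Function.minimalPeriod ⇑T x ≤ n₁} ∧
      (∀ x ∈ {x | 1 ≤ Function.minimalPeriod ⇑T x ∧ Function.minimalPeriod ⇑T x ≤ n₁},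
        ψ (T x) = shift (ψ x)) ∧
      Set.InjOn (fun x => fun i : Fin n₁ => ψ x ((i : ℕ) : ℤ))
        {x | 1 ≤ Function.minimalPeriod ⇑T x ∧ Function.minimalPeriod ⇑T x ≤ n₁} := by
  have hfin : ∀ n, 0 < n → (leastPer T n).Finite := fun n hn =>
    have := (finite_leastPer_shift (Λ := Fin K) hn).to_subtype
    Set.finite_coe_iff.1 (Finite.of_injective _ (hcard n hn).some.injective)
  have hle : ∀ n, 0 < n →
      (leastPer T n).ncard ≤ (leastPer (shift : (ℤ → Fin K) → _) n).ncard := fun n hn => by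
    have := (finite_leastPer_shift (Λ := Fin K) hn).to_subtype
    simpa only [Nat.card_coe_set_eq] using
      Nat.card_le_card_of_injective _ (hcard n hn).some.injective
  simp only [Nat.card_coe_set_eq] at hgrowth
  obtain ⟨hK, E, hE, hEK, hEn⟩ := exists_growth_rate_lt
    (fun n hn => (hle n hn).trans (ncard_leastPer_shift_le hn)) hgrowth
  obtain ⟨M, hM⟩ := eventually_atTop.1 (eventually_add_mul_sum_add_pow_le hK hE.le hEK hEn)
  refine ⟨2 * M, fun n₁ hn₁ => ?_⟩
  obtain ⟨ψ, hψ⟩ := exists_isPeriodicCoding hK hfin hle hM hn₁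
  exact ⟨ψ, hψ.injOn_window.of_comp, hψ.map_apply, hψ.injOn_window⟩

/-- Coding of periodic points: for all sufficiently large `n₁` there is an
injective equivariant map `ψ` from the points of least period at most `n₁` into the `K`-full
shift whose restriction `ψ^{n₁}` to the first `n₁` coordinates is still injective. -/
theorem statement_12 {X : Type*} [MetricSpace X] [CompactSpace X]
    (K : ℕ) (T : X ≃ₜ X)
    (hgrowth : Filter.limsup
      (fun n : ℕ => Real.log (Nat.card ↥(leastPer ⇑T n)) / n) Filter.atTop < Real.log K)
    (hcard : ∀ n : ℕ, 1 ≤ n →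
      Nonempty (↥(leastPer ⇑T n) ↪ ↥(leastPer (shift : (ℤ → Fin K) → ℤ → Fin K) n))) :
    ∃ N₀ : ℕ, ∀ n₁ ≥ N₀, ∃ ψ : X → ℤ → Fin K,
      Set.InjOn ψ {x | 1 ≤ Function.minimalPeriod ⇑T x ∧ Function.minimalPeriod ⇑T x ≤ n₁} ∧
      (∀ x ∈ {x | 1 ≤ Function.minimalPeriod ⇑T x ∧ Function.minimalPeriod ⇑T x ≤ n₁},
        ψ (T x) = shift (ψ x)) ∧
      Set.InjOn (fun x => fun i : Fin n₁ => ψ x ((i : ℕ) : ℤ))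
        {x | 1 ≤ Function.minimalPeriod ⇑T x ∧ Function.minimalPeriod ⇑T x ≤ n₁} :=
  statement_12_general K T hgrowth hcard
end
end
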